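/- arXiv:1509.07775 — 14 statements merged into one kernel-verified Lean document; each statement's English description precedes it below -/
import Mathlib

section
/- The spectral radius of the 3×3 real matrix FV⁻¹ = [[0, v_w(μ_a+ψ)μ_fu φ_w/(b_f ψ μ_fw φ_u), 0], [b_f ψ/(μ_a+ψ), 0, 0], [b_m ψ/(μ_a+ψ), 0, 0]] equals R_0 = sqrt(v_w (φ_w/μ_fw)(μ_fu/φ_u)). -/
/-!
The characteristic polynomial of `!![0, a, 0; c, 0, 0; d, 0, 0]` is `z (z² - a c)`, so its complex
spectrum is `{0, ±√(a c)}` and its spectral radius is `√|a c|`. For the next-generation matrix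
the product of the two off-diagonal entries `a c` is exactly `R₀²`.
-/

open Matrix Polynomial

def nextGenMatrix {R : Type*} [Zero R] (a c d : R) : Matrix (Fin 3) (Fin 3) R :=
  !![0, a, 0; c, 0, 0; d, 0, 0]

theorem nextGenMatrix_map {R S : Type*} [Zero R] [Zero S] (f : R → S) (hf : f 0 = 0) (a c d : R) :
    (nextGenMatrix a c d).map f = nextGenMatrix (f a) (f c) (f d) := by
  ext i j
  fin_cases i <;> fin_cases j <;> simp [nextGenMatrix, hf]

theorem eval_charpoly_nextGenMatrix {R : Type*} [CommRing R] (a c d z : R) :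
    (nextGenMatrix a c d).charpoly.eval z = z * (z ^ 2 - a * c) := by
  rw [eval_charpoly, det_fin_three]
  simp only [nextGenMatrix, scalar_apply, Matrix.sub_apply, diagonal_apply_eq, diagonal_apply_ne,
    of_apply, cons_val', cons_val_zero, cons_val_one, cons_val, cons_val_fin_one, ne_eq,
    Fin.reduceEq, not_false_eq_true, Fin.isValue, sub_zero, zero_sub, sub_self, mul_zero,
    zero_mul, mul_neg, neg_mul, neg_neg, neg_zero, add_zero]
  ring

theorem mem_spectrum_nextGenMatrix_iff {K : Type*} [Field K] (a c d z : K) :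
    z ∈ spectrum K (nextGenMatrix a c d) ↔ z = 0 ∨ z ^ 2 = a * c := by
  rw [mem_spectrum_iff_isRoot_charpoly, IsRoot.def, eval_charpoly_nextGenMatrix, mul_eq_zero,
    sub_eq_zero]

theorem norm_eq_sqrt_of_sq_eq {z w : ℂ} (h : z ^ 2 = w) : ‖z‖ = √‖w‖ := by
  rw [← h, norm_pow, Real.sqrt_sq (norm_nonneg z)]

theorem spectralRadius_nextGenMatrix (a c d : ℂ) :
    spectralRadius ℂ (nextGenMatrix a c d) = ENNReal.ofReal √‖a * c‖ := by
  have coe_nnnorm_eq (z : ℂ) : (‖z‖₊ : ENNReal) = ENNReal.ofReal ‖z‖ :=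
    (ENNReal.ofReal_eq_coe_nnreal (norm_nonneg z)).symm
  obtain ⟨z₀, hz₀⟩ := IsAlgClosed.exists_pow_nat_eq (a * c) two_pos
  refine le_antisymm (iSup₂_le fun z hz => ?_) (le_iSup₂_of_le z₀ ?_ ?_)
  · rw [coe_nnnorm_eq]
    rcases (mem_spectrum_nextGenMatrix_iff a c d z).1 hz with rfl | hz
    · simp
    · rw [norm_eq_sqrt_of_sq_eq hz]
  · exact (mem_spectrum_nextGenMatrix_iff a c d z₀).2 (Or.inr hz₀)
  · rw [coe_nnnorm_eq, norm_eq_sqrt_of_sq_eq hz₀]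

theorem spectralRadius_next_generation_matrix_general
    (bf vw φu φw ψ μa μfu μfw : ℝ)
    (hbf : 0 < bf) (hvw0 : 0 < vw)
    (hφu : 0 < φu) (hφw : 0 < φw) (hψ : 0 < ψ) (hμa : 0 < μa)
    (hμfu : 0 < μfu) (hμfw : 0 < μfw) :
    spectralRadius ℂ
      ((!![0, vw * (μa + ψ) * μfu * φw / (bf * ψ * μfw * φu), 0;
          bf * ψ / (μa + ψ), 0, 0;
          (1 - bf) * ψ / (μa + ψ), 0, 0] : Matrix (Fin 3) (Fin 3) ℝ).map
        (Complex.ofReal)) =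
      ENNReal.ofReal (Real.sqrt (vw * (φw / μfw) * (μfu / φu))) := by
  have hR₀ : vw * (μa + ψ) * μfu * φw / (bf * ψ * μfw * φu) * (bf * ψ / (μa + ψ)) =
      vw * (φw / μfw) * (μfu / φu) := by
    field_simp
  have hR₀_nonneg : 0 ≤ vw * (φw / μfw) * (μfu / φu) := by positivity
  change spectralRadius ℂ ((nextGenMatrix _ _ _).map Complex.ofReal) = _
  rw [nextGenMatrix_map _ Complex.ofReal_zero, spectralRadius_nextGenMatrix,
    ← Complex.ofReal_mul, Complex.norm_real, hR₀, Real.norm_of_nonneg hR₀_nonneg]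

/-- The spectral radius of the next-generation matrix FV⁻¹ equals
`R₀ = sqrt(v_w (φ_w/μ_fw)(μ_fu/φ_u))`. -/
theorem spectralRadius_next_generation_matrix
    (bf vw φu φw ψ μa μfu μfw μmw : ℝ)
    (hbf : 0 < bf) (hbf1 : bf < 1) (hvw0 : 0 < vw) (hvw1 : vw ≤ 1)
    (hφu : 0 < φu) (hφw : 0 < φw) (hψ : 0 < ψ) (hμa : 0 < μa)
    (hμfu : 0 < μfu) (hμfw : 0 < μfw) (hμmw : 0 < μmw) :
    spectralRadius ℂ
      ((!![0, vw * (μa + ψ) * μfu * φw / (bf * ψ * μfw * φu), 0;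
          bf * ψ / (μa + ψ), 0, 0;
          (1 - bf) * ψ / (μa + ψ), 0, 0] : Matrix (Fin 3) (Fin 3) ℝ).map
        (Complex.ofReal)) =
      ENNReal.ofReal (Real.sqrt (vw * (φw / μfw) * (μfu / φu))) :=
  spectralRadius_next_generation_matrix_general bf vw φu φw ψ μa μfu μfw hbf hvw0 hφu hφw hψ hμa
    hμfu hμfw
end

section
/- Assume R_0u = b_f φ_u ψ/((μ_a+ψ)μ_fu) > 1. Then the point with A_u⁰ = K_a(1 − 1/R_0u), F_u⁰ = b_f ψ A_u⁰/μ_fu, M_u⁰ = b_m ψ A_u⁰/μ_mu and A_w = F_w = M_w = 0 is an equilibrium of the Wolbachia mosquito model (the vector field vanishes there), and it is the unique such equilibrium with A_w = F_w = M_w = 0 and A_u > 0. -/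
/-- The Wolbachia mosquito model vector field on states
`x = (A_u, A_w, F_u, F_w, M_u, M_w)` (indices 0..5). -/
noncomputable def wolbField (bf vw φu φw ψ μa μfu μfw μmu μmw Ka : ℝ)
    (x : Fin 6 → ℝ) : Fin 6 → ℝ :=
  ![ φu * x 2 * (x 4 / (x 4 + x 5)) * (1 - (x 0 + x 1) / Ka)
      + (1 - vw) * (φw * x 3 * (x 4 / (x 4 + x 5)) * (1 - (x 0 + x 1) / Ka)
          + φw * x 3 * (1 - x 4 / (x 4 + x 5)) * (1 - (x 0 + x 1) / Ka))
      - (μa + ψ) * x 0,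
    vw * (φw * x 3 * (x 4 / (x 4 + x 5)) * (1 - (x 0 + x 1) / Ka)
          + φw * x 3 * (1 - x 4 / (x 4 + x 5)) * (1 - (x 0 + x 1) / Ka))
      - (μa + ψ) * x 1,
    bf * ψ * x 0 - μfu * x 2,
    bf * ψ * x 1 - μfw * x 3,
    (1 - bf) * ψ * x 0 - μmu * x 4,
    (1 - bf) * ψ * x 1 - μmw * x 5 ]

/-!
On the Wolbachia-free face `A_w = F_w = M_w = 0` with `M_u ≠ 0` every mating is with an
uninfected male (`m_u = 1`), so the model collapses to the classical logistic-recruitment system: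
`F_u` and `M_u` are fixed linearly by `A_u`, and the `A_u`-equation factors as
`(μ_a + ψ) A_u (R_0u (1 - A_u / K_a) - 1) = 0`. A nonzero `A_u` is therefore an equilibrium value
exactly when `R_0u (1 - A_u / K_a) = 1`, i.e. `A_u = K_a (1 - 1 / R_0u)`, which is positive
when `R_0u > 1`.
-/

theorem mul_one_sub_div_eq_one_iff {R K a : ℝ} (hR : R ≠ 0) (hK : K ≠ 0) :
    R * (1 - a / K) = 1 ↔ a = K * (1 - 1 / R) := by
  field_simp
  constructor <;> intro h <;> linarith

theorem eq_vecCons_of_wolbachiaFree {x : Fin 6 → ℝ} (h1 : x 1 = 0) (h3 : x 3 = 0)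
    (h5 : x 5 = 0) : x = ![x 0, 0, x 2, 0, x 4, 0] := by
  funext i
  fin_cases i <;> simp [h1, h3, h5]

section WolbachiaFree

variable (bf vw φu φw ψ μa μfu μfw μmu μmw Ka : ℝ)

theorem wolbField_wolbachiaFree {a f m : ℝ} (hm : m ≠ 0) :
    wolbField bf vw φu φw ψ μa μfu μfw μmu μmw Ka ![a, 0, f, 0, m, 0] =
      ![φu * f * (1 - a / Ka) - (μa + ψ) * a, 0, bf * ψ * a - μfu * f, 0,
        (1 - bf) * ψ * a - μmu * m, 0] := by
  funext i
  fin_cases i <;> simp [wolbField, hm]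

theorem wolbField_wolbachiaFree_eq_zero_iff (hd : μa + ψ ≠ 0) (hμfu : μfu ≠ 0)
    (hμmu : μmu ≠ 0) ⦃a f m : ℝ⦄ (ha : a ≠ 0) (hm : m ≠ 0) :
    wolbField bf vw φu φw ψ μa μfu μfw μmu μmw Ka ![a, 0, f, 0, m, 0] = 0 ↔
      f = bf * ψ * a / μfu ∧ m = (1 - bf) * ψ * a / μmu ∧
        bf * φu * ψ / ((μa + ψ) * μfu) * (1 - a / Ka) = 1 := by
  rw [wolbField_wolbachiaFree _ _ _ _ _ _ _ _ _ _ _ hm]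
  simp only [Matrix.cons_eq_zero_iff, Matrix.zero_empty, and_true, true_and]
  have hFu : bf * ψ * a - μfu * f = 0 ↔ f = bf * ψ * a / μfu := by
    rw [eq_div_iff hμfu, sub_eq_zero, mul_comm f, eq_comm]
  have hMu : (1 - bf) * ψ * a - μmu * m = 0 ↔ m = (1 - bf) * ψ * a / μmu := by
    rw [eq_div_iff hμmu, sub_eq_zero, mul_comm m, eq_comm]
  have hAu : f = bf * ψ * a / μfu → (φu * f * (1 - a / Ka) - (μa + ψ) * a = 0 ↔
      bf * φu * ψ / ((μa + ψ) * μfu) * (1 - a / Ka) = 1) := by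
    rintro rfl
    have hfactor : φu * (bf * ψ * a / μfu) * (1 - a / Ka) - (μa + ψ) * a =
        (μa + ψ) * a * (bf * φu * ψ / ((μa + ψ) * μfu) * (1 - a / Ka) - 1) := by
      field_simp
    rw [hfactor, mul_eq_zero, mul_eq_zero, sub_eq_zero]
    simp only [hd, ha, false_or]
  rw [hFu, hMu]
  exact ⟨fun ⟨h, hf, hm⟩ => ⟨hf, hm, (hAu hf).1 h⟩, fun ⟨hf, hm, h⟩ => ⟨(hAu hf).2 h, hf, hm⟩⟩

end WolbachiaFree

theorem disease_free_equilibrium_exists_unique_general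
    (bf vw φu φw ψ μa μfu μfw μmu μmw Ka : ℝ)
    (hbf1 : bf < 1)
    (hμmu : 0 < μmu)
    (hKa : 0 < Ka)
    (hR0u : 1 < bf * φu * ψ / ((μa + ψ) * μfu))
    (Au0 : ℝ) (hAu0 : Au0 = Ka * (1 - 1 / (bf * φu * ψ / ((μa + ψ) * μfu))))
    (x0 : Fin 6 → ℝ)
    (hx0 : x0 = ![Au0, 0, bf * ψ * Au0 / μfu, 0, (1 - bf) * ψ * Au0 / μmu, 0]) :
    wolbField bf vw φu φw ψ μa μfu μfw μmu μmw Ka x0 = 0 ∧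
    ∀ x : Fin 6 → ℝ, 0 < x 4 + x 5 →
      wolbField bf vw φu φw ψ μa μfu μfw μmu μmw Ka x = 0 →
      x 1 = 0 → x 3 = 0 → x 5 = 0 → 0 < x 0 → x = x0 := by
  have hR : bf * φu * ψ / ((μa + ψ) * μfu) ≠ 0 := (zero_lt_one.trans hR0u).ne'
  obtain ⟨-, -, hψ, hd, hμfu⟩ : bf ≠ 0 ∧ φu ≠ 0 ∧ ψ ≠ 0 ∧ μa + ψ ≠ 0 ∧ μfu ≠ 0 := by
    simpa [div_ne_zero_iff, mul_ne_zero_iff, and_assoc] using hR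
  have hAu0_pos : 0 < Au0 := by
    have : 1 / (bf * φu * ψ / ((μa + ψ) * μfu)) < 1 := (div_lt_one (by linarith)).2 hR0u
    rw [hAu0]
    exact mul_pos hKa (by linarith)
  have hMu0 : (1 - bf) * ψ * Au0 / μmu ≠ 0 :=
    div_ne_zero (mul_ne_zero (mul_ne_zero (sub_ne_zero.2 hbf1.ne') hψ) hAu0_pos.ne') hμmu.ne'
  have hequil := wolbField_wolbachiaFree_eq_zero_iff bf vw φu φw ψ μa μfu μfw μmu μmw Ka
    hd hμfu hμmu.ne'
  refine ⟨?_, fun x hMpos hx h1 h3 h5 hApos => ?_⟩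
  · rw [hx0]
    exact (hequil hAu0_pos.ne' hMu0).2
      ⟨rfl, rfl, (mul_one_sub_div_eq_one_iff hR hKa.ne').2 hAu0⟩
  · have hx4 : x 4 ≠ 0 := by
      rw [h5, add_zero] at hMpos
      exact hMpos.ne'
    rw [eq_vecCons_of_wolbachiaFree h1 h3 h5] at hx ⊢
    obtain ⟨hFu, hMu, hR1⟩ := (hequil hApos.ne' hx4).1 hx
    have hAu : x 0 = Au0 := hAu0 ▸ (mul_one_sub_div_eq_one_iff hR hKa.ne').1 hR1
    rw [hx0, hFu, hMu, hAu]

/-- existence and uniqueness of the disease-free equilibrium. -/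
theorem disease_free_equilibrium_exists_unique
    (bf vw φu φw ψ μa μfu μfw μmu μmw Ka : ℝ)
    (hbf : 0 < bf) (hbf1 : bf < 1) (hvw0 : 0 ≤ vw) (hvw1 : vw ≤ 1)
    (hφu : 0 < φu) (hφw : 0 < φw) (hψ : 0 < ψ) (hμa : 0 < μa)
    (hμfu : 0 < μfu) (hμfw : 0 < μfw) (hμmu : 0 < μmu) (hμmw : 0 < μmw)
    (hKa : 0 < Ka)
    (hR0u : 1 < bf * φu * ψ / ((μa + ψ) * μfu))
    (Au0 : ℝ) (hAu0 : Au0 = Ka * (1 - 1 / (bf * φu * ψ / ((μa + ψ) * μfu))))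
    (x0 : Fin 6 → ℝ)
    (hx0 : x0 = ![Au0, 0, bf * ψ * Au0 / μfu, 0, (1 - bf) * ψ * Au0 / μmu, 0]) :
    wolbField bf vw φu φw ψ μa μfu μfw μmu μmw Ka x0 = 0 ∧
    ∀ x : Fin 6 → ℝ, 0 < x 4 + x 5 →
      wolbField bf vw φu φw ψ μa μfu μfw μmu μmw Ka x = 0 →
      x 1 = 0 → x 3 = 0 → x 5 = 0 → 0 < x 0 → x = x0 :=
  disease_free_equilibrium_exists_unique_general bf vw φu φw ψ μa μfu μfw μmu μmw Ka hbf1 hμmu hKa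
    hR0u Au0 hAu0 x0 hx0
end

section
/- If R_0u = b_f φ_u ψ/((μ_a+ψ)μ_fu) > 1, then every eigenvalue (over ℂ) of the 3×3 real matrix A = [[−(μ_a+ψ) − φ_u F_u⁰/K_a, μ_fu(μ_a+ψ)/(b_f ψ), 0], [b_f ψ, −μ_fu, 0], [b_m ψ, 0, −μ_mu]], where F_u⁰ = b_f ψ K_a (1 − 1/R_0u)/μ_fu, has negative real part. -/
open Polynomial Matrix

lemma charpoly_eval_fin3 (M : Matrix (Fin 3) (Fin 3) ℂ) (t : ℂ) :
    M.charpoly.eval t = (t • (1:Matrix (Fin 3) (Fin 3) ℂ) - M).det := by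
  rw [Matrix.charpoly, ← Polynomial.coe_evalRingHom, RingHom.map_det]
  congr 1
  ext i j
  by_cases h : i = j <;>
    simp [Matrix.charmatrix_apply, h, Matrix.one_apply, Matrix.diagonal_apply]

lemma quad_neg_re (p q : ℝ) (hp : 0 < p) (hq : 0 < q) (z : ℂ)
    (h : z ^ 2 + (p:ℂ) * z + (q:ℂ) = 0) : z.re < 0 := by
  have hre : z.re ^ 2 - z.im ^ 2 + p * z.re + q = 0 := by
    have := congrArg Complex.re h
    simp [pow_two, Complex.add_re, Complex.mul_re] at this
    nlinarith [this]
  have him : z.im * (2 * z.re + p) = 0 := by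
    have := congrArg Complex.im h
    simp [pow_two, Complex.add_im, Complex.mul_im] at this
    nlinarith [this]
  rcases mul_eq_zero.mp him with h0 | h0
  · by_contra hx
    push_neg at hx
    nlinarith [hre, h0]
  · linarith

/-- if `R₀ᵤ > 1` then every complex eigenvalue of the
uninfected-compartment Jacobian block `A` has negative real part. -/
theorem uninfected_block_eigenvalues_neg_re
    (bf φu ψ μa μfu μmu Ka : ℝ)
    (hbf : 0 < bf) (hbf1 : bf < 1)
    (hφu : 0 < φu) (hψ : 0 < ψ) (hμa : 0 < μa)
    (hμfu : 0 < μfu) (hμmu : 0 < μmu) (hKa : 0 < Ka)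
    (hR0u : 1 < bf * φu * ψ / ((μa + ψ) * μfu))
    (Fu0 : ℝ)
    (hFu0 : Fu0 = bf * ψ * Ka * (1 - 1 / (bf * φu * ψ / ((μa + ψ) * μfu))) / μfu) :
    ∀ lam : ℂ,
      ((!![-(μa + ψ) - φu * Fu0 / Ka, μfu * (μa + ψ) / (bf * ψ), 0;
          bf * ψ, -μfu, 0;
          (1 - bf) * ψ, 0, -μmu] : Matrix (Fin 3) (Fin 3) ℝ).map
        Complex.ofReal).charpoly.IsRoot lam → lam.re < 0 := by
  intro lam h
  rw [Polynomial.IsRoot, charpoly_eval_fin3, Matrix.det_fin_three] at h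
  simp [Matrix.map_apply, Matrix.smul_apply, Matrix.one_apply] at h
  -- positivity of Fu0
  have hFu0pos : 0 < Fu0 := by
    rw [hFu0]
    have h1 : 0 < bf * φu * ψ / ((μa + ψ) * μfu) := by positivity
    have h2 : 1 / (bf * φu * ψ / ((μa + ψ) * μfu)) < 1 := by
      rw [div_lt_one h1]; linarith
    have h3 : 0 < bf * ψ * Ka * (1 - 1 / (bf * φu * ψ / ((μa + ψ) * μfu))) :=
      mul_pos (by positivity) (by linarith)
    exact div_pos h3 hμfu
  set p : ℝ := μa + ψ + φu * Fu0 / Ka + μfu with hp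
  set q : ℝ := μfu * (φu * Fu0 / Ka) with hq
  have hppos : 0 < p := by positivity
  have hqpos : 0 < q := by positivity
  have hbψ : ((bf:ℂ) * (ψ:ℂ)) ≠ 0 := by
    simp only [ne_eq, mul_eq_zero, Complex.ofReal_eq_zero]
    push_neg
    exact ⟨ne_of_gt hbf, ne_of_gt hψ⟩
  have hbc : ((μfu:ℂ) * ((μa:ℂ) + (ψ:ℂ)) / ((bf:ℂ) * (ψ:ℂ))) * ((bf:ℂ) * (ψ:ℂ))
      = (μfu:ℂ) * ((μa:ℂ) + (ψ:ℂ)) := div_mul_cancel₀ _ hbψ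
  have key : (lam + (μmu:ℂ)) * (lam ^ 2 + (p:ℂ) * lam + (q:ℂ)) = 0 := by
    push_cast [hp, hq]
    linear_combination h + (lam + (μmu:ℂ)) * hbc
  rcases mul_eq_zero.mp key with h0 | h0
  · have hl : lam = -(μmu:ℂ) := eq_neg_of_add_eq_zero_left h0
    rw [hl]
    simpa using hμmu
  · exact quad_neg_re p q hppos hqpos lam h0
end

section
/- If R_0 = sqrt(v_w (φ_w/μ_fw)(μ_fu/φ_u)) < 1, then every eigenvalue (over ℂ) of the 3×3 real matrix B = [[−(μ_a+ψ), v_w(μ_a+ψ)μ_fu φ_w/(b_f ψ φ_u), 0], [b_f ψ, −μ_fw, 0], [b_m ψ, 0, −μ_mw]] has negative real part. -/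
lemma quad_root_neg_re (p q : ℝ) (hp : 0 < p) (hq : 0 < q) (lam : ℂ)
    (h : lam ^ 2 + (p : ℂ) * lam + (q : ℂ) = 0) : lam.re < 0 := by
  have h1 := congrArg Complex.re h
  have h2 := congrArg Complex.im h
  simp [pow_two, Complex.add_re, Complex.add_im, Complex.mul_re, Complex.mul_im] at h1 h2
  have hy : lam.im * (2 * lam.re + p) = 0 := by linear_combination h2
  rcases mul_eq_zero.mp hy with hy0 | hx
  · rw [hy0] at h1
    nlinarith [sq_nonneg lam.re, h1]
  · linarith
/-- if `R₀ < 1` then every complex eigenvalue of the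
infected-compartment Jacobian block `B` has negative real part. -/
theorem infected_block_eigenvalues_neg_re
    (bf vw φu φw ψ μa μfu μfw μmw : ℝ)
    (hbf : 0 < bf) (hbf1 : bf < 1) (hvw0 : 0 < vw) (hvw1 : vw ≤ 1)
    (hφu : 0 < φu) (hφw : 0 < φw) (hψ : 0 < ψ) (hμa : 0 < μa)
    (hμfu : 0 < μfu) (hμfw : 0 < μfw) (hμmw : 0 < μmw)
    (hR0 : Real.sqrt (vw * (φw / μfw) * (μfu / φu)) < 1) :
    ∀ lam : ℂ,
      ((!![-(μa + ψ), vw * (μa + ψ) * μfu * φw / (bf * ψ * φu), 0;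
          bf * ψ, -μfw, 0;
          (1 - bf) * ψ, 0, -μmw] : Matrix (Fin 3) (Fin 3) ℝ).map
        Complex.ofReal).charpoly.IsRoot lam → lam.re < 0 := by
  intro lam h
  rw [Polynomial.IsRoot, Matrix.charpoly, Polynomial.eval, ← Polynomial.coe_eval₂RingHom,
    RingHom.map_det] at h
  rw [Matrix.det_fin_three] at h
  simp [Matrix.charmatrix_apply, Matrix.map_apply] at h
  -- nonzero denominators over ℂ
  have hbC : (bf : ℂ) ≠ 0 := Complex.ofReal_ne_zero.mpr hbf.ne'
  have hpC : (ψ : ℂ) ≠ 0 := Complex.ofReal_ne_zero.mpr hψ.ne'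
  have huC : (φu : ℂ) ≠ 0 := Complex.ofReal_ne_zero.mpr hφu.ne'
  set p : ℝ := (μa + ψ) + μfw with hp_def
  set q : ℝ := (μa + ψ) * μfw - vw * (μa + ψ) * μfu * φw / φu with hq_def
  have hc : (vw : ℂ) * ((μa : ℂ) + ψ) * μfu * φw / ((bf : ℂ) * ψ * φu) * ((bf : ℂ) * ψ)
      = (vw : ℂ) * ((μa : ℂ) + ψ) * μfu * φw / (φu : ℂ) := by
    field_simp
  have key : (lam + (μmw : ℂ)) * (lam ^ 2 + (p : ℂ) * lam + (q : ℂ)) = 0 := by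
    push_cast [hp_def, hq_def]
    linear_combination h + (lam + (μmw : ℂ)) * hc
  -- positivity of p and q
  have hp : 0 < p := by positivity
  have ht : vw * (φw / μfw) * (μfu / φu) < 1 := by
    nlinarith [Real.sq_sqrt (by positivity : (0:ℝ) ≤ vw * (φw / μfw) * (μfu / φu)),
      Real.sqrt_nonneg (vw * (φw / μfw) * (μfu / φu))]
  have hq : 0 < q := by
    have h1 : vw * (μa + ψ) * μfu * φw / φu
        = (μa + ψ) * μfw * (vw * (φw / μfw) * (μfu / φu)) := by
      field_simp
    rw [hq_def, h1]
    nlinarith [mul_pos (by positivity : (0:ℝ) < μa + ψ) hμfw]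
  rcases mul_eq_zero.mp key with h0 | h2
  · have : lam = -(μmw : ℂ) := by linear_combination h0
    rw [this]
    simpa using hμmw
  · exact quad_root_neg_re p q hp hq lam h2
end

section
/- Assume R_0u = b_f φ_u ψ/((μ_a+ψ)μ_fu) > 1 and R_0 = sqrt(v_w (φ_w/μ_fw)(μ_fu/φ_u)) < 1. Then every eigenvalue (over ℂ) of the derivative (6×6 Jacobian matrix) of the Wolbachia mosquito model vector field, evaluated at the disease-free equilibrium (A_u⁰, 0, F_u⁰, 0, M_u⁰, 0) with A_u⁰ = K_a(1 − 1/R_0u), F_u⁰ = b_f ψ A_u⁰/μ_fu, M_u⁰ = b_m ψ A_u⁰/μ_mu, has negative real part (so the disease-free equilibrium is locally asymptotically stable). -/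
/-!
The births of infected larvae are proportional to `F_w`, which vanishes at the disease-free
equilibrium, so the linearised equations of `(A_w, F_w, M_w)` do not involve the uninfected
variables. Listing the infected coordinates first, the Jacobian is block lower triangular, and its characteristic polynomial is the
product of those of two `3 × 3` blocks. In each block the male equation decouples (eigenvalue
`-μ_m`), and the remaining `2 × 2` block has negative trace and positive determinant: the
equilibrium condition `φ_u (1 - A_u⁰/K_a) b_f ψ = (μ_a + ψ) μ_fu` turns the uninfected determinant
into `φ_u F_u⁰ μ_fu / K_a` and the infected one into `(μ_a + ψ) μ_fw (1 - R_0²)`. A real quadratic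
with positive coefficients has its roots in the open left half-plane.
-/

open Polynomial

theorem Complex.re_neg_of_sq_add_mul_add_eq_zero {p q : ℝ} (hp : 0 < p) (hq : 0 < q) {z : ℂ}
    (hz : z ^ 2 + p * z + q = 0) : z.re < 0 := by
  have hre : z.re ^ 2 - z.im ^ 2 + p * z.re + q = 0 := by
    simpa [pow_two] using congrArg Complex.re hz
  have him : z.im * (2 * z.re + p) = 0 := by
    have h := congrArg Complex.im hz
    simp only [pow_two, Complex.add_im, Complex.mul_im, Complex.ofReal_re, Complex.ofReal_im,
      zero_mul, add_zero, Complex.zero_im] at h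
    linear_combination h
  by_contra! hz_re
  have him0 : z.im = 0 := (mul_eq_zero.1 him).resolve_right (by linarith)
  nlinarith

theorem Matrix.charpoly_fin_three_of_upperRight_eq_zero {R : Type*} [CommRing R]
    (B : Matrix (Fin 3) (Fin 3) R) (h02 : B 0 2 = 0) (h12 : B 1 2 = 0) :
    B.charpoly = (X ^ 2 - C (B 0 0 + B 1 1) * X + C (B 0 0 * B 1 1 - B 0 1 * B 1 0)) *
      (X - C (B 2 2)) := by
  rw [Matrix.charpoly, Matrix.det_fin_three]
  simp only [charmatrix_apply_eq, charmatrix_apply_ne, ne_eq, Fin.reduceEq, not_false_eq_true,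
    h02, h12, map_zero, neg_zero, mul_zero, zero_mul, sub_zero, add_zero, mul_neg, neg_mul, neg_neg,
    map_add, map_sub, map_mul]
  ring

theorem Matrix.re_neg_of_isRoot_charpoly_fin_three {B : Matrix (Fin 3) (Fin 3) ℝ}
    (h02 : B 0 2 = 0) (h12 : B 1 2 = 0) (htrace : B 0 0 + B 1 1 < 0)
    (hdet : 0 < B 0 0 * B 1 1 - B 0 1 * B 1 0) (h22 : B 2 2 < 0) {z : ℂ}
    (hz : (B.charpoly.map Complex.ofRealHom).IsRoot z) : z.re < 0 := by
  rw [B.charpoly_fin_three_of_upperRight_eq_zero h02 h12] at hz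
  simp only [IsRoot, eval_map, eval₂_mul, eval₂_sub, eval₂_add, eval₂_X, eval₂_C, eval₂_pow,
    mul_eq_zero] at hz
  rcases hz with hquad | hlin
  · refine Complex.re_neg_of_sq_add_mul_add_eq_zero (p := -(B 0 0 + B 1 1)) (by linarith) hdet ?_
    simp only [Complex.ofRealHom_eq_coe] at hquad
    push_cast at hquad ⊢
    linear_combination hquad
  · have hre := congrArg Complex.re hlin
    simp only [Complex.sub_re, Complex.ofRealHom_eq_coe, Complex.ofReal_re, Complex.zero_re,
      sub_eq_zero] at hre
    linarith

theorem HasFDerivAt.div {E 𝕜 : Type*} [NontriviallyNormedField 𝕜] [NormedAddCommGroup E]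
    [NormedSpace 𝕜 E] {c d : E → 𝕜} {c' d' : E →L[𝕜] 𝕜} {x : E}
    (hc : HasFDerivAt c c' x) (hd : HasFDerivAt d d' x) (hx : d x ≠ 0) :
    HasFDerivAt (fun y => c y / d y) ((d x ^ 2)⁻¹ • (d x • c' - c x • d')) x := by
  simp only [div_eq_mul_inv]
  refine (hc.mul ((hasFDerivAt_inv' hx).comp x hd)).congr_fderiv ?_
  ext v
  simp only [ContinuousLinearMap.neg_comp, smul_neg, Function.comp_apply, add_apply, neg_apply,
    smul_apply, ContinuousLinearMap.comp_apply, ContinuousLinearMap.mulLeftRight_apply,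
    smul_eq_mul, sub_apply]
  field_simp
  ring

/-- Unapplied form of `Fin.consEquivL_apply`; it lets `simp` evaluate derivatives assembled with
`HasFDerivAt.finCons` at numeral indices. -/
theorem Fin.consEquivL_eq_cons {n : ℕ} {R : Type*} {M : Fin n.succ → Type*} [Semiring R]
    [∀ i, AddCommMonoid (M i)] [∀ i, Module R (M i)] [∀ i, TopologicalSpace (M i)]
    (a : M 0 × Π i, M (Fin.succ i)) : Fin.consEquivL R M a = Fin.cons a.1 a.2 :=
  funext (Fin.consEquivL_apply R M a)

section Jacobian

variable (bf vw φu φw ψ μa μfu μfw μmu μmw Ka : ℝ)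

noncomputable def wolbJacobian (A F M : ℝ) : Matrix (Fin 6) (Fin 6) ℝ :=
  !![-(φu * F / Ka) - (μa + ψ), -(φu * F / Ka), φu * (1 - A / Ka),
      (1 - vw) * φw * (1 - A / Ka), 0, -(φu * F * (1 - A / Ka) / M);
    0, -(μa + ψ), 0, vw * φw * (1 - A / Ka), 0, 0;
    bf * ψ, 0, -μfu, 0, 0, 0;
    0, bf * ψ, 0, -μfw, 0, 0;
    (1 - bf) * ψ, 0, 0, 0, -μmu, 0;
    0, (1 - bf) * ψ, 0, 0, 0, -μmw]

variable {bf vw φu φw ψ μa μfu μfw μmu μmw Ka}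

theorem hasFDerivAt_wolbField {A F M : ℝ} (hKa : Ka ≠ 0) (hM : M ≠ 0) :
    HasFDerivAt (wolbField bf vw φu φw ψ μa μfu μfw μmu μmw Ka)
      (Matrix.toLin' (wolbJacobian bf vw φu φw ψ μa μfu μfw μmu μmw Ka A F M)).toContinuousLinearMap
      ![A, 0, F, 0, M, 0] := by
  set x₀ : Fin 6 → ℝ := ![A, 0, F, 0, M, 0]
  have hx : ∀ i, HasFDerivAt (fun x : Fin 6 → ℝ => x i) (ContinuousLinearMap.proj i) x₀ :=
    fun i => hasFDerivAt_apply (𝕜 := ℝ) (F' := fun _ => ℝ) i x₀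
  have hm_u := (hx 4).div ((hx 4).add (hx 5)) (by simpa [x₀] using hM)
  have hlogistic := ((hx 0).add (hx 1)).mul_const Ka⁻¹ |>.const_sub 1
  have hbirth_w := ((((hx 3).const_mul φw).mul hm_u).mul hlogistic).add
    ((((hx 3).const_mul φw).mul (hm_u.const_sub 1)).mul hlogistic)
  refine (HasFDerivAt.finCons (F' := fun _ => ℝ)
    ((((((hx 2).const_mul φu).mul hm_u).mul hlogistic).add (hbirth_w.const_mul (1 - vw))).sub
      ((hx 0).const_mul (μa + ψ))) <|
    HasFDerivAt.finCons (F' := fun _ => ℝ)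
      ((hbirth_w.const_mul vw).sub ((hx 1).const_mul (μa + ψ))) <|
    HasFDerivAt.finCons (F' := fun _ => ℝ)
      (((hx 0).const_mul (bf * ψ)).sub ((hx 2).const_mul μfu)) <|
    HasFDerivAt.finCons (F' := fun _ => ℝ)
      (((hx 1).const_mul (bf * ψ)).sub ((hx 3).const_mul μfw)) <|
    HasFDerivAt.finCons (F' := fun _ => ℝ)
      (((hx 0).const_mul ((1 - bf) * ψ)).sub ((hx 4).const_mul μmu)) <|
    HasFDerivAt.finCons (F' := fun _ => ℝ)
      (((hx 1).const_mul ((1 - bf) * ψ)).sub ((hx 5).const_mul μmw))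
      (hasFDerivAt_const ![] x₀)).congr_fderiv ?_
  ext v i
  fin_cases i <;>
    simp [x₀, wolbJacobian, Fin.consEquivL_eq_cons, Matrix.mulVec, dotProduct, Fin.sum_univ_six] <;>
    field_simp <;> ring

theorem charpoly_wolbJacobian (A F M : ℝ) :
    (wolbJacobian bf vw φu φw ψ μa μfu μfw μmu μmw Ka A F M).charpoly =
      (!![-(μa + ψ), vw * φw * (1 - A / Ka), 0;
          bf * ψ, -μfw, 0;
          (1 - bf) * ψ, 0, -μmw] : Matrix (Fin 3) (Fin 3) ℝ).charpoly *
      (!![-(φu * F / Ka) - (μa + ψ), φu * (1 - A / Ka), 0;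
          bf * ψ, -μfu, 0;
          (1 - bf) * ψ, 0, -μmu] : Matrix (Fin 3) (Fin 3) ℝ).charpoly := by
  let e : Fin 3 ⊕ Fin 3 ≃ Fin 6 :=
    { toFun := Sum.elim ![1, 3, 5] ![0, 2, 4]
      invFun := ![.inr 0, .inl 0, .inr 1, .inl 1, .inr 2, .inl 2]
      left_inv := by decide
      right_inv := by decide }
  rw [← Matrix.charpoly_reindex e.symm, ← Matrix.charpoly_fromBlocks_zero₁₂ (M₂₁ :=
    (!![-(φu * F / Ka), (1 - vw) * φw * (1 - A / Ka), -(φu * F * (1 - A / Ka) / M);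
        0, 0, 0; 0, 0, 0]))]
  congr 1
  ext (i | i) (j | j) <;> fin_cases i <;> fin_cases j <;> rfl

theorem re_neg_of_isRoot_charpoly_wolbJacobian {A F M : ℝ} (hμaψ : 0 < μa + ψ) (hμfu : 0 < μfu)
    (hμfw : 0 < μfw) (hμmu : 0 < μmu) (hμmw : 0 < μmw) (hF : 0 < φu * F / Ka)
    (hu : φu * (1 - A / Ka) * (bf * ψ) = (μa + ψ) * μfu)
    (hw : vw * φw * (1 - A / Ka) * (bf * ψ) < (μa + ψ) * μfw) {z : ℂ}
    (hz : ((wolbJacobian bf vw φu φw ψ μa μfu μfw μmu μmw Ka A F M).map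
      Complex.ofReal).charpoly.IsRoot z) :
    z.re < 0 := by
  replace hz : ((wolbJacobian bf vw φu φw ψ μa μfu μfw μmu μmw Ka A F M).charpoly.map
      Complex.ofRealHom).IsRoot z := by rwa [← Matrix.charpoly_map]
  rw [charpoly_wolbJacobian, Polynomial.map_mul, IsRoot, eval_mul, mul_eq_zero] at hz
  rcases hz with hz_w | hz_u
  · refine Matrix.re_neg_of_isRoot_charpoly_fin_three rfl rfl ?_ ?_ ?_ hz_w <;>
      simp only [Matrix.of_apply, Matrix.cons_val', Matrix.cons_val, Matrix.cons_val_fin_one] <;>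
      linarith
  · refine Matrix.re_neg_of_isRoot_charpoly_fin_three rfl rfl ?_ ?_ ?_ hz_u <;>
      simp only [Matrix.of_apply, Matrix.cons_val', Matrix.cons_val, Matrix.cons_val_fin_one] <;>
      linarith [mul_pos hF hμfu]

end Jacobian

theorem disease_free_equilibrium_LAS_general
    (bf vw φu φw ψ μa μfu μfw μmu μmw Ka : ℝ)
    (hbf : 0 < bf) (hbf1 : bf < 1)
    (hφu : 0 < φu) (hψ : 0 < ψ) (hμa : 0 < μa)
    (hμfu : 0 < μfu) (hμfw : 0 < μfw) (hμmu : 0 < μmu) (hμmw : 0 < μmw)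
    (hKa : 0 < Ka)
    (hR0u : 1 < bf * φu * ψ / ((μa + ψ) * μfu))
    (hR0 : Real.sqrt (vw * (φw / μfw) * (μfu / φu)) < 1)
    (Au0 : ℝ) (hAu0 : Au0 = Ka * (1 - 1 / (bf * φu * ψ / ((μa + ψ) * μfu))))
    (x0 : Fin 6 → ℝ)
    (hx0 : x0 = ![Au0, 0, bf * ψ * Au0 / μfu, 0, (1 - bf) * ψ * Au0 / μmu, 0])
    (J : Matrix (Fin 6) (Fin 6) ℝ)
    (hJ : J = LinearMap.toMatrix' (fderiv ℝ
        (wolbField bf vw φu φw ψ μa μfu μfw μmu μmw Ka) x0).toLinearMap) :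
    ∀ lam : ℂ, (J.map Complex.ofReal).charpoly.IsRoot lam → lam.re < 0 := by
  intro lam hlam
  have hμaψ : 0 < μa + ψ := by linarith
  have hAu0_pos : 0 < Au0 := by
    rw [hAu0, one_div]
    exact mul_pos hKa (sub_pos.2 (inv_lt_one_of_one_lt₀ hR0u))
  have hM : (1 - bf) * ψ * Au0 / μmu ≠ 0 := by
    have : 0 < 1 - bf := by linarith
    positivity
  have hu : φu * (1 - Au0 / Ka) * (bf * ψ) = (μa + ψ) * μfu := by
    rw [hAu0]
    field_simp
    ring
  have hw : vw * φw * (1 - Au0 / Ka) * (bf * ψ) < (μa + ψ) * μfw := by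
    have hR0sq : vw * (φw / μfw) * (μfu / φu) < 1 := by simpa using (Real.sqrt_lt' one_pos).1 hR0
    calc vw * φw * (1 - Au0 / Ka) * (bf * ψ)
        = vw * φw / φu * (φu * (1 - Au0 / Ka) * (bf * ψ)) := by field_simp
      _ = (μa + ψ) * μfw * (vw * (φw / μfw) * (μfu / φu)) := by rw [hu]; field_simp
      _ < (μa + ψ) * μfw := mul_lt_of_lt_one_right (by positivity) hR0sq
  rw [hJ, hx0, (hasFDerivAt_wolbField hKa.ne' hM).fderiv,
    LinearMap.coe_toContinuousLinearMap, LinearMap.toMatrix'_toLin'] at hlam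
  exact re_neg_of_isRoot_charpoly_wolbJacobian hμaψ hμfu hμfw hμmu hμmw (by positivity) hu hw hlam

/-- if `R₀ᵤ > 1` and `R₀ < 1` then every complex eigenvalue of the
6×6 Jacobian matrix of the Wolbachia model at the disease-free equilibrium has
negative real part (local asymptotic stability of the DFE). -/
theorem disease_free_equilibrium_LAS
    (bf vw φu φw ψ μa μfu μfw μmu μmw Ka : ℝ)
    (hbf : 0 < bf) (hbf1 : bf < 1) (hvw0 : 0 < vw) (hvw1 : vw ≤ 1)
    (hφu : 0 < φu) (hφw : 0 < φw) (hψ : 0 < ψ) (hμa : 0 < μa)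
    (hμfu : 0 < μfu) (hμfw : 0 < μfw) (hμmu : 0 < μmu) (hμmw : 0 < μmw)
    (hKa : 0 < Ka)
    (hR0u : 1 < bf * φu * ψ / ((μa + ψ) * μfu))
    (hR0 : Real.sqrt (vw * (φw / μfw) * (μfu / φu)) < 1)
    (Au0 : ℝ) (hAu0 : Au0 = Ka * (1 - 1 / (bf * φu * ψ / ((μa + ψ) * μfu))))
    (x0 : Fin 6 → ℝ)
    (hx0 : x0 = ![Au0, 0, bf * ψ * Au0 / μfu, 0, (1 - bf) * ψ * Au0 / μmu, 0])
    (J : Matrix (Fin 6) (Fin 6) ℝ)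
    (hJ : J = LinearMap.toMatrix' (fderiv ℝ
        (wolbField bf vw φu φw ψ μa μfu μfw μmu μmw Ka) x0).toLinearMap) :
    ∀ lam : ℂ, (J.map Complex.ofReal).charpoly.IsRoot lam → lam.re < 0 :=
  disease_free_equilibrium_LAS_general bf vw φu φw ψ μa μfu μfw μmu μmw Ka hbf hbf1 hφu hψ hμa hμfu
    hμfw hμmu hμmw hKa hR0u hR0 Au0 hAu0 x0 hx0 J hJ
end

section
/- Assume complete vertical transmission v_w = 1 (so v_u = 0), R_0 = sqrt((φ_w/μ_fw)(μ_fu/φ_u)) < 1, and R_0w = b_f ψ φ_w/((μ_a+ψ)μ_fw) > 1. Set k = (μ_mw/μ_mu)(R_0⁻² − 1) and A_u* = K_a(1 − 1/R_0w)/(1+k). Then the point (A_u*, A_w* = k A_u*, F_u* = b_f ψ A_u*/μ_fu, F_w* = b_f ψ A_w*/μ_fw, M_u* = b_m ψ A_u*/μ_mu, M_w* = b_m ψ A_w*/μ_mw) has all six components strictly positive and is an equilibrium of the Wolbachia mosquito model. -/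
theorem div_add_mul_inv_sub_one {K : Type*} [Field K] {a : K} (c : K) (ha : a ≠ 0) :
    a / (a + a * (c⁻¹ - 1)) = c := by
  rw [show a + a * (c⁻¹ - 1) = a * c⁻¹ by ring, div_mul_cancel_left₀ ha, inv_inv]

theorem wolbField_one_eq_zero_iff (bf φu φw ψ μa μfu μfw μmu μmw Ka : ℝ) (x : Fin 6 → ℝ) :
    wolbField bf 1 φu φw ψ μa μfu μfw μmu μmw Ka x = 0 ↔
      φu * x 2 * (x 4 / (x 4 + x 5)) * (1 - (x 0 + x 1) / Ka) = (μa + ψ) * x 0 ∧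
      φw * x 3 * (1 - (x 0 + x 1) / Ka) = (μa + ψ) * x 1 ∧
      bf * ψ * x 0 = μfu * x 2 ∧ bf * ψ * x 1 = μfw * x 3 ∧
      (1 - bf) * ψ * x 0 = μmu * x 4 ∧ (1 - bf) * ψ * x 1 = μmw * x 5 := by
  simp only [funext_iff, Fin.forall_fin_succ, wolbField, Pi.zero_apply, Matrix.cons_val_zero,
    Matrix.cons_val_succ, IsEmpty.forall_iff, and_true]
  have hsplit : ∀ m s : ℝ, φw * x 3 * m * s + φw * x 3 * (1 - m) * s = φw * x 3 * s := by
    intros; ring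
  simp only [sub_self, zero_mul, add_zero, one_mul, hsplit, sub_eq_zero]

theorem endemic_equilibrium_exists_complete_transmission_general
    (bf φu φw ψ μa μfu μfw μmu μmw Ka : ℝ)
    (hbf : 0 < bf) (hbf1 : bf < 1)
    (hφu : 0 < φu) (hφw : 0 < φw) (hψ : 0 < ψ)
    (hμfu : 0 < μfu) (hμfw : 0 < μfw) (hμmu : 0 < μmu) (hμmw : 0 < μmw)
    (hKa : 0 < Ka)
    (R0 : ℝ) (hR0 : R0 = Real.sqrt ((φw / μfw) * (μfu / φu))) (hR0lt : R0 < 1)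
    (hR0w : 1 < bf * ψ * φw / ((μa + ψ) * μfw))
    (k : ℝ) (hk : k = (μmw / μmu) * (1 / R0 ^ 2 - 1))
    (Au : ℝ) (hAu : Au = Ka * (1 - 1 / (bf * ψ * φw / ((μa + ψ) * μfw))) / (1 + k))
    (x : Fin 6 → ℝ)
    (hx : x = ![Au, k * Au, bf * ψ * Au / μfu, bf * ψ * (k * Au) / μfw,
      (1 - bf) * ψ * Au / μmu, (1 - bf) * ψ * (k * Au) / μmw]) :
    (∀ i, 0 < x i) ∧
    wolbField bf 1 φu φw ψ μa μfu μfw μmu μmw Ka x = 0 := by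
  set R0w := bf * ψ * φw / ((μa + ψ) * μfw) with hR0w_def
  have hR0sq : R0 ^ 2 = φw / μfw * (μfu / φu) := hR0 ▸ Real.sq_sqrt (by positivity)
  have hR0_pos : 0 < R0 := hR0 ▸ Real.sqrt_pos.mpr (by positivity)
  have hk_pos : 0 < k := hk ▸ mul_pos (by positivity)
    (sub_pos.2 (one_lt_one_div (by positivity) (pow_lt_one₀ hR0_pos.le hR0lt two_ne_zero)))
  have hAu_pos : 0 < Au := hAu ▸ div_pos
    (mul_pos hKa (sub_pos.2 ((div_lt_one (by linarith)).2 hR0w))) (by linarith)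
  have hmating : (1 - bf) * ψ * Au / μmu /
      ((1 - bf) * ψ * Au / μmu + (1 - bf) * ψ * (k * Au) / μmw) = R0 ^ 2 := by
    convert div_add_mul_inv_sub_one (R0 ^ 2) (a := (1 - bf) * ψ * Au / μmu) (by positivity)
      using 3
    rw [hk]; field_simp
  have hcrowding : 1 - (Au + k * Au) / Ka = 1 / R0w := by
    rw [hAu]; field_simp; ring
  subst hx
  refine ⟨fun i => ?_, (wolbField_one_eq_zero_iff ..).mpr ?_⟩
  · fin_cases i <;> simp only [Fin.reduceFinMk, Matrix.cons_val] <;> positivity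
  · simp only [Matrix.cons_val_zero, Matrix.cons_val_one, Matrix.cons_val]
    rw [hmating, hcrowding, hR0w_def, one_div_div, hR0sq]
    refine ⟨?_, ?_, ?_, ?_, ?_, ?_⟩ <;> field_simp

/-- under complete vertical transmission (`v_w = 1`), `R₀ < 1` and
`R₀w > 1`, the endemic point with ratio `k = (μ_mw/μ_mu)(R₀⁻² − 1)` is a strictly
positive equilibrium of the Wolbachia mosquito model. -/
theorem endemic_equilibrium_exists_complete_transmission
    (bf φu φw ψ μa μfu μfw μmu μmw Ka : ℝ)
    (hbf : 0 < bf) (hbf1 : bf < 1)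
    (hφu : 0 < φu) (hφw : 0 < φw) (hψ : 0 < ψ) (hμa : 0 < μa)
    (hμfu : 0 < μfu) (hμfw : 0 < μfw) (hμmu : 0 < μmu) (hμmw : 0 < μmw)
    (hKa : 0 < Ka)
    (R0 : ℝ) (hR0 : R0 = Real.sqrt ((φw / μfw) * (μfu / φu))) (hR0lt : R0 < 1)
    (hR0w : 1 < bf * ψ * φw / ((μa + ψ) * μfw))
    (k : ℝ) (hk : k = (μmw / μmu) * (1 / R0 ^ 2 - 1))
    (Au : ℝ) (hAu : Au = Ka * (1 - 1 / (bf * ψ * φw / ((μa + ψ) * μfw))) / (1 + k))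
    (x : Fin 6 → ℝ)
    (hx : x = ![Au, k * Au, bf * ψ * Au / μfu, bf * ψ * (k * Au) / μfw,
      (1 - bf) * ψ * Au / μmu, (1 - bf) * ψ * (k * Au) / μmw]) :
    (∀ i, 0 < x i) ∧
    wolbField bf 1 φu φw ψ μa μfu μfw μmu μmw Ka x = 0 :=
  endemic_equilibrium_exists_complete_transmission_general bf φu φw ψ μa μfu μfw μmu μmw Ka hbf hbf1
    hφu hφw hψ hμfu hμfw hμmu hμmw hKa R0 hR0 hR0lt hR0w k hk Au hAu x hx
end

section
/- Assume complete vertical transmission v_w = 1 (so v_u = 0), R_0 = sqrt((φ_w/μ_fw)(μ_fu/φ_u)) < 1, and R_0w = b_f ψ φ_w/((μ_a+ψ)μ_fw) > 1. Then the equilibrium of the Wolbachia mosquito model with all six components strictly positive is unique: any equilibrium (A_u, A_w, F_u, F_w, M_u, M_w) with all components > 0 satisfies A_w/A_u = (μ_mw/μ_mu)(R_0⁻² − 1), A_u = K_a(1 − 1/R_0w)/(1 + A_w/A_u), F_u = b_f ψ A_u/μ_fu, F_w = b_f ψ A_w/μ_fw, M_u = b_m ψ A_u/μ_mu, M_w =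 b_m ψ A_w/μ_mw. -/
/-- under complete vertical transmission (`v_w = 1`), `R₀ < 1` and
`R₀w > 1`, any strictly positive equilibrium of the Wolbachia model satisfies the
stated closed-form relations (uniqueness of the endemic equilibrium). -/
theorem endemic_equilibrium_unique_complete_transmission
    (bf φu φw ψ μa μfu μfw μmu μmw Ka : ℝ)
    (hbf : 0 < bf) (hbf1 : bf < 1)
    (hφu : 0 < φu) (hφw : 0 < φw) (hψ : 0 < ψ) (hμa : 0 < μa)
    (hμfu : 0 < μfu) (hμfw : 0 < μfw) (hμmu : 0 < μmu) (hμmw : 0 < μmw)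
    (hKa : 0 < Ka)
    (R0 : ℝ) (hR0 : R0 = Real.sqrt ((φw / μfw) * (μfu / φu))) (hR0lt : R0 < 1)
    (hR0w : 1 < bf * ψ * φw / ((μa + ψ) * μfw))
    (x : Fin 6 → ℝ) (hpos : ∀ i, 0 < x i)
    (heq : wolbField bf 1 φu φw ψ μa μfu μfw μmu μmw Ka x = 0) :
    x 1 / x 0 = (μmw / μmu) * (1 / R0 ^ 2 - 1) ∧
    x 0 = Ka * (1 - 1 / (bf * ψ * φw / ((μa + ψ) * μfw))) / (1 + x 1 / x 0) ∧
    x 2 = bf * ψ * x 0 / μfu ∧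
    x 3 = bf * ψ * x 1 / μfw ∧
    x 4 = (1 - bf) * ψ * x 0 / μmu ∧
    x 5 = (1 - bf) * ψ * x 1 / μmw := by
  have hx0 := hpos 0; have hx1 := hpos 1; have hx2 := hpos 2
  have hx3 := hpos 3; have hx4 := hpos 4; have hx5 := hpos 5
  have hS : (0:ℝ) < x 4 + x 5 := by linarith
  have hS' : x 4 + x 5 ≠ 0 := ne_of_gt hS
  have hKa' : Ka ≠ 0 := ne_of_gt hKa
  have e0 : φu * x 2 * (x 4 / (x 4 + x 5)) * (1 - (x 0 + x 1) / Ka)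
      + (1 - 1) * (φw * x 3 * (x 4 / (x 4 + x 5)) * (1 - (x 0 + x 1) / Ka)
          + φw * x 3 * (1 - x 4 / (x 4 + x 5)) * (1 - (x 0 + x 1) / Ka))
      - (μa + ψ) * x 0 = 0 := congrFun heq 0
  have e1 : 1 * (φw * x 3 * (x 4 / (x 4 + x 5)) * (1 - (x 0 + x 1) / Ka)
          + φw * x 3 * (1 - x 4 / (x 4 + x 5)) * (1 - (x 0 + x 1) / Ka))
      - (μa + ψ) * x 1 = 0 := congrFun heq 1
  have e2 : bf * ψ * x 0 - μfu * x 2 = 0 := congrFun heq 2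
  have e3 : bf * ψ * x 1 - μfw * x 3 = 0 := congrFun heq 3
  have e4 : (1 - bf) * ψ * x 0 - μmu * x 4 = 0 := congrFun heq 4
  have e5 : (1 - bf) * ψ * x 1 - μmw * x 5 = 0 := congrFun heq 5
  clear heq hpos
  have g2 : x 2 = bf * ψ * x 0 / μfu := by
    field_simp; linarith [e2]
  have g3 : x 3 = bf * ψ * x 1 / μfw := by
    field_simp; linarith [e3]
  have g4 : x 4 = (1 - bf) * ψ * x 0 / μmu := by
    field_simp; linarith [e4]
  have g5 : x 5 = (1 - bf) * ψ * x 1 / μmw := by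
    field_simp; linarith [e5]
  -- clear denominators in e0, e1
  have e0' : φu * x 2 * x 4 * (Ka - (x 0 + x 1)) = (μa + ψ) * x 0 * ((x 4 + x 5) * Ka) := by
    field_simp at e0; linarith [e0]
  have e1' : φw * x 3 * (Ka - (x 0 + x 1)) = (μa + ψ) * x 1 * Ka := by
    field_simp at e1
    have h : (x 4 + x 5) * (φw * x 3 * (Ka - (x 0 + x 1)) - (μa + ψ) * x 1 * Ka) = 0 := by
      linear_combination e1
    rcases mul_eq_zero.mp h with h | h
    · exact absurd h hS'
    · linarith
  -- C' = Ka - (x0 + x1)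
  have hC : φw * (bf * ψ) * (Ka - (x 0 + x 1)) = (μa + ψ) * Ka * μfw := by
    have h : x 1 * (φw * (bf * ψ) * (Ka - (x 0 + x 1)) - (μa + ψ) * Ka * μfw) = 0 := by
      linear_combination μfw * e1' + φw * (Ka - (x 0 + x 1)) * e3
    rcases mul_eq_zero.mp h with h | h
    · exact absurd h hx1.ne'
    · linarith
  have hCpos : 0 < Ka - (x 0 + x 1) := by
    have h1 : 0 < (μa + ψ) * Ka * μfw := by positivity
    rw [← hC] at h1
    have h2 : 0 < φw * (bf * ψ) := by positivity
    exact (mul_pos_iff_of_pos_left h2).mp h1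
  have hB : φu * (bf * ψ) * x 4 * (Ka - (x 0 + x 1)) = (μa + ψ) * ((x 4 + x 5) * Ka) * μfu := by
    have h : x 0 * (φu * (bf * ψ) * x 4 * (Ka - (x 0 + x 1))
        - (μa + ψ) * ((x 4 + x 5) * Ka) * μfu) = 0 := by
      linear_combination μfu * e0' + φu * x 4 * (Ka - (x 0 + x 1)) * e2
    rcases mul_eq_zero.mp h with h | h
    · exact absurd h hx0.ne'
    · linarith
  have hM : φu * μfw * x 4 = φw * μfu * (x 4 + x 5) := by
    have hc2 : (0:ℝ) < bf * ψ * (Ka - (x 0 + x 1)) := by positivity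
    have h : (bf * ψ * (Ka - (x 0 + x 1))) * (φu * μfw * x 4 - φw * μfu * (x 4 + x 5)) = 0 := by
      linear_combination μfw * hB - (x 4 + x 5) * μfu * hC
    rcases mul_eq_zero.mp h with h | h
    · exact absurd h hc2.ne'
    · linarith
  have ht : R0 ^ 2 = (φw / μfw) * (μfu / φu) := by
    rw [hR0, Real.sq_sqrt]; positivity
  have hR0pos : 0 < R0 := by
    rw [hR0]; apply Real.sqrt_pos.mpr; positivity
  have hq : (0:ℝ) < (1 - bf) * ψ := by
    have : 0 < 1 - bf := by linarith
    positivity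
  have hP : x 1 * (μmu * (φw * μfu)) = x 0 * (μmw * (φu * μfw - φw * μfu)) := by
    have h : ((1 - bf) * ψ) * (x 1 * (μmu * (φw * μfu))
        - x 0 * (μmw * (φu * μfw - φw * μfu))) = 0 := by
      linear_combination (-(μmu * μmw)) * hM - μmw * (φu * μfw - φw * μfu) * e4
        + μmu * (φw * μfu) * e5
    rcases mul_eq_zero.mp h with h | h
    · exact absurd h hq.ne'
    · linarith
  have hne1 := hμmu.ne'
  have hne2 := hμmw.ne'
  have hne3 := hμfu.ne'
  have hne4 := hμfw.ne'
  have hne5 := hφu.ne'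
  have hne6 := hφw.ne'
  have hne7 := hbf.ne'
  have hne8 := hψ.ne'
  have hne9 : μa + ψ ≠ 0 := by positivity
  constructor
  · have key : x 1 / x 0 = (μmw * (φu * μfw - φw * μfu)) / (μmu * (φw * μfu)) := by
      rw [div_eq_div_iff hx0.ne' (by positivity : (0:ℝ) < μmu * (φw * μfu)).ne']
      linear_combination hP
    rw [ht, key]
    field_simp
  refine ⟨?_, g2, g3, g4, g5⟩
  have hden : (0:ℝ) < 1 + x 1 / x 0 := by positivity
  rw [eq_div_iff hden.ne']
  have hab : x 0 + x 1 = Ka * (1 - 1 / (bf * ψ * φw / ((μa + ψ) * μfw))) := by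
    field_simp
    linear_combination -hC
  have hxx : x 0 * (1 + x 1 / x 0) = x 0 + x 1 := by
    field_simp
  rw [hxx, hab]
end

section
/- If R_0w = b_f ψ φ_w/((μ_a+ψ)μ_fw) > 1, then every complex root λ of the quadratic λ² + (μ_fw + φ_w b_f ψ/μ_fw)λ + (φ_w b_f ψ − (μ_a+ψ)μ_fw) = 0 has negative real part. -/
/-- if `R₀w > 1` then every complex root of the characteristic
quadratic of the infected block at the complete-infection equilibrium has
negative real part. -/
theorem infected_block_char_quadratic_roots_neg_re
    (bf φw ψ μa μfw : ℝ)
    (hbf : 0 < bf) (hbf1 : bf < 1)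
    (hφw : 0 < φw) (hψ : 0 < ψ) (hμa : 0 < μa) (hμfw : 0 < μfw)
    (hR0w : 1 < bf * ψ * φw / ((μa + ψ) * μfw)) :
    ∀ lam : ℂ,
      lam ^ 2 + (↑(μfw + φw * bf * ψ / μfw) : ℂ) * lam
        + (↑(φw * bf * ψ - (μa + ψ) * μfw) : ℂ) = 0 →
      lam.re < 0 := by
  intro lam heq
  set b : ℝ := μfw + φw * bf * ψ / μfw with hb
  set c : ℝ := φw * bf * ψ - (μa + ψ) * μfw with hc
  have hbpos : 0 < b := by
    have : 0 < φw * bf * ψ / μfw := by positivity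
    simp only [hb]; linarith
  have hcpos : 0 < c := by
    have hd : 0 < (μa + ψ) * μfw := by positivity
    rw [lt_div_iff₀ hd] at hR0w
    simp only [hc]; nlinarith
  set x := lam.re with hx
  set y := lam.im with hy
  have hre : x ^ 2 - y ^ 2 + b * x + c = 0 := by
    have := congrArg Complex.re heq
    simpa [pow_two, Complex.mul_re, ← hx, ← hy] using this
  have him : y * (2 * x + b) = 0 := by
    have := congrArg Complex.im heq
    simp [pow_two, Complex.mul_im, ← hx, ← hy] at this
    ring_nf at this ⊢
    linarith
  rcases mul_eq_zero.mp him with h | h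
  · -- y = 0
    rw [h] at hre
    by_contra hxe
    push_neg at hxe
    nlinarith
  · -- 2x + b = 0
    nlinarith
end

section
/- Assume 0 < v_w < 1 and μ_mu = μ_mw. If (A_u, A_w, F_u, F_w, M_u, M_w) is an equilibrium of the Wolbachia mosquito model with all six components strictly positive, then the ratio k = A_w/A_u satisfies the quadratic equation v_u k² − (2v_w − 1)k + v_w(R_0⁻² − 1) = 0, where R_0 = sqrt(v_w (φ_w/μ_fw)(μ_fu/φ_u)). -/
/-!
With equal male death rates the male equations give `M_u : M_w = A_u : A_w`, so the mating
fraction `m_u` equals `A_u / N_A`, and the female equations give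
`μ_fu F_u : μ_fw F_w = A_u : A_w`. Cross-multiplying the two adult equations eliminates the
density factor `1 - N_A / K_a`, leaving one homogeneous relation of degree two in `A_u, A_w`;
dividing it by `A_u²` gives the quadratic in `k`, whose constant term comes from
`v_w R_0⁻² = φ_u μ_fw / (φ_w μ_fu)`.
-/

theorem wolbField_eq_zero_iff {bf vw φu φw ψ μa μfu μfw μmu μmw Ka : ℝ} {x : Fin 6 → ℝ} :
    wolbField bf vw φu φw ψ μa μfu μfw μmu μmw Ka x = 0 ↔
      (φu * x 2 * (x 4 / (x 4 + x 5)) + (1 - vw) * φw * x 3) * (1 - (x 0 + x 1) / Ka)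
          = (μa + ψ) * x 0 ∧
        vw * φw * x 3 * (1 - (x 0 + x 1) / Ka) = (μa + ψ) * x 1 ∧
        bf * ψ * x 0 = μfu * x 2 ∧ bf * ψ * x 1 = μfw * x 3 ∧
        (1 - bf) * ψ * x 0 = μmu * x 4 ∧ (1 - bf) * ψ * x 1 = μmw * x 5 := by
  simp only [funext_iff, Fin.forall_fin_succ, IsEmpty.forall_iff, wolbField, Pi.zero_apply,
    Matrix.cons_val_zero, Matrix.cons_val_succ, and_true, sub_eq_zero]
  refine and_congr ?_ (and_congr ?_ Iff.rfl) <;> constructor <;> intro h <;> linear_combination h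

theorem mul_eq_mul_of_mul_eq_mul_of_mul_eq_mul {K : Type*} [Field K] {p q g c u w : K}
    (hc : c ≠ 0) (hp : p * g = c * u) (hq : q * g = c * w) : p * w = q * u := by
  apply mul_left_cancel₀ hc
  linear_combination q * hp - p * hq

theorem quadratic_of_female_and_adult_balance {K : Type*} [Field K]
    {vw φu φw μfu μfw Au Aw Fu Fw : K} (hvw : vw ≠ 0) (hφw : φw ≠ 0) (hμfu : μfu ≠ 0)
    (hAu : Au ≠ 0) (hFw : Fw ≠ 0) (hN : Au + Aw ≠ 0)
    (hF : Au * (μfw * Fw) = Aw * (μfu * Fu))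
    (hA : (φu * Fu * (Au / (Au + Aw)) + (1 - vw) * φw * Fw) * Aw = vw * φw * Fw * Au) :
    (1 - vw) * (Aw / Au) ^ 2 - (2 * vw - 1) * (Aw / Au)
      + vw * (1 / (vw * (φw / μfw) * (μfu / φu)) - 1) = 0 := by
  have hbalance : φu * μfw * Au ^ 2 + (1 - vw) * φw * μfu * Aw * (Au + Aw)
      = vw * φw * μfu * Au * (Au + Aw) := by
    apply mul_left_cancel₀ hFw
    field_simp at hA
    linear_combination μfu * hA + φu * Au * hF
  field_simp
  linear_combination hbalance

theorem endemic_ratio_satisfies_quadratic_general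
    (bf vw φu φw ψ μa μfu μfw μmu μmw Ka : ℝ)
    (hvw0 : 0 < vw)
    (hφu : 0 < φu) (hφw : 0 < φw) (hψ : 0 < ψ) (hμa : 0 < μa)
    (hμfu : 0 < μfu) (hμfw : 0 < μfw) (hμmu : 0 < μmu)
    (hmm : μmu = μmw)
    (x : Fin 6 → ℝ) (hpos : ∀ i, 0 < x i)
    (heq : wolbField bf vw φu φw ψ μa μfu μfw μmu μmw Ka x = 0)
    (R0 : ℝ) (hR0 : R0 = Real.sqrt (vw * (φw / μfw) * (μfu / φu)))
    (k : ℝ) (hk : k = x 1 / x 0) :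
    (1 - vw) * k ^ 2 - (2 * vw - 1) * k + vw * (1 / R0 ^ 2 - 1) = 0 := by
  obtain ⟨hAu, hAw, hFu, hFw, hMu, hMw⟩ := wolbField_eq_zero_iff.mp heq
  have hN : 0 < x 0 + x 1 := add_pos (hpos 0) (hpos 1)
  have hmale : x 4 / (x 4 + x 5) = x 0 / (x 0 + x 1) := by
    rw [← hmm] at hMw
    rw [div_eq_div_iff (add_pos (hpos 4) (hpos 5)).ne' hN.ne']
    apply mul_left_cancel₀ hμmu.ne'
    linear_combination x 0 * hMw - x 1 * hMu
  have hfemale : x 0 * (μfw * x 3) = x 1 * (μfu * x 2) := by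
    linear_combination x 1 * hFu - x 0 * hFw
  rw [hmale] at hAu
  have hadult := mul_eq_mul_of_mul_eq_mul_of_mul_eq_mul (add_pos hμa hψ).ne' hAu hAw
  have hR0sq : R0 ^ 2 = vw * (φw / μfw) * (μfu / φu) := hR0 ▸ Real.sq_sqrt (by positivity)
  rw [hk, hR0sq]
  exact quadratic_of_female_and_adult_balance hvw0.ne' hφw.ne' hμfu.ne' (hpos 0).ne'
    (hpos 3).ne' hN.ne' hfemale hadult

/-- with incomplete vertical transmission `0 < v_w < 1` and equal
male death rates, at any strictly positive equilibrium the ratio `k = A_w/A_u`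
satisfies `v_u k² − (2v_w − 1)k + v_w(R₀⁻² − 1) = 0`. -/
theorem endemic_ratio_satisfies_quadratic
    (bf vw φu φw ψ μa μfu μfw μmu μmw Ka : ℝ)
    (hbf : 0 < bf) (hbf1 : bf < 1) (hvw0 : 0 < vw) (hvw1 : vw < 1)
    (hφu : 0 < φu) (hφw : 0 < φw) (hψ : 0 < ψ) (hμa : 0 < μa)
    (hμfu : 0 < μfu) (hμfw : 0 < μfw) (hμmu : 0 < μmu) (hμmw : 0 < μmw)
    (hKa : 0 < Ka) (hmm : μmu = μmw)
    (x : Fin 6 → ℝ) (hpos : ∀ i, 0 < x i)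
    (heq : wolbField bf vw φu φw ψ μa μfu μfw μmu μmw Ka x = 0)
    (R0 : ℝ) (hR0 : R0 = Real.sqrt (vw * (φw / μfw) * (μfu / φu)))
    (k : ℝ) (hk : k = x 1 / x 0) :
    (1 - vw) * k ^ 2 - (2 * vw - 1) * k + vw * (1 / R0 ^ 2 - 1) = 0 :=
  endemic_ratio_satisfies_quadratic_general bf vw φu φw ψ μa μfu μfw μmu μmw Ka hvw0 hφu hφw hψ hμa
    hμfu hμfw hμmu hmm x hpos heq R0 hR0 k hk
end

section
/- Let 0 < v_w < 1, v_u = 1 − v_w, and R_0 > 1. Then the quadratic v_u k² − (2v_w − 1)k + v_w(R_0⁻² − 1) = 0 has exactly one strictly positive real root, namely k₁ = (2v_w − 1 + sqrt(1 − 4v_w v_u R_0⁻²))/(2v_u). -/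
/-!
With `a > 0` and `c < 0` the discriminant `b² - 4ac` exceeds `b²`, so its square root `s`
satisfies `s > |b|`: of the two roots `(-b ± s) / 2a` the one with `+` is positive and the one
with `-` is negative. For the Wolbachia quadratic, `a = v_u > 0` and `c = v_w (R₀⁻² - 1) < 0`
because `R₀ > 1`.
-/

theorem abs_lt_sqrt_discrim_of_mul_neg {a b c : ℝ} (hac : a * c < 0) :
    |b| < Real.sqrt (discrim a b c) := by
  rw [← Real.sqrt_sq_eq_abs]
  exact Real.sqrt_lt_sqrt (sq_nonneg b) (by unfold discrim; linarith)

theorem setOf_pos_quadratic_root_eq_singleton {a b c : ℝ} (ha : 0 < a) (hc : c < 0) :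
    {x : ℝ | 0 < x ∧ a * x ^ 2 + b * x + c = 0}
      = {(-b + Real.sqrt (discrim a b c)) / (2 * a)} := by
  set s := Real.sqrt (discrim a b c)
  have hbs : |b| < s := abs_lt_sqrt_discrim_of_mul_neg (mul_neg_of_pos_of_neg ha hc)
  obtain ⟨hbs₁, hbs₂⟩ := abs_lt.mp hbs
  have hs : discrim a b c = s * s :=
    (Real.mul_self_sqrt (by unfold discrim; nlinarith)).symm
  have ha2 : 0 < 2 * a := by positivity
  ext x
  simp only [Set.mem_ofPred_eq, Set.mem_singleton_iff, sq]
  rw [quadratic_eq_zero_iff ha.ne' hs]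
  constructor
  · rintro ⟨hx, rfl | rfl⟩
    · rfl
    · exact absurd hx (div_neg_of_neg_of_pos (by linarith) ha2).not_gt
  · rintro rfl
    exact ⟨div_pos (by linarith) ha2, Or.inl rfl⟩

/-- for `0 < v_w < 1` and `R₀ > 1`, the quadratic
`v_u k² − (2v_w − 1)k + v_w(R₀⁻² − 1) = 0` has exactly one strictly positive
real root, namely `k₁`. -/
theorem quadratic_unique_positive_root
    (vw R0 : ℝ) (hvw0 : 0 < vw) (hvw1 : vw < 1) (hR0 : 1 < R0)
    (k1 : ℝ)
    (hk1 : k1 = (2 * vw - 1 + Real.sqrt (1 - 4 * vw * (1 - vw) * (1 / R0 ^ 2)))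
      / (2 * (1 - vw))) :
    {k : ℝ | 0 < k ∧
      (1 - vw) * k ^ 2 - (2 * vw - 1) * k + vw * (1 / R0 ^ 2 - 1) = 0}
      = {k1} := by
  have hR0inv : 1 / R0 ^ 2 < 1 := by
    rw [div_lt_one (by positivity)]
    nlinarith
  have hdiscrim : discrim (1 - vw) (-(2 * vw - 1)) (vw * (1 / R0 ^ 2 - 1))
      = 1 - 4 * vw * (1 - vw) * (1 / R0 ^ 2) := by
    unfold discrim; ring
  have hroots := setOf_pos_quadratic_root_eq_singleton (b := -(2 * vw - 1))
    (sub_pos.mpr hvw1) (mul_neg_of_pos_of_neg hvw0 (sub_neg.mpr hR0inv))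
  rw [hdiscrim, neg_neg] at hroots
  rw [hk1, ← hroots]
  simp only [neg_mul, ← sub_eq_add_neg]
end

section
/- If R_0u = φθψ/(μ_fu(μ_a+ψ)) < 1, then every eigenvalue (over ℂ) of the 3×3 real matrix J₀ = [[−(μ_a+ψ), φ, 0], [θψ, −μ_fu, 0], [(1−θ)ψ, 0, −μ_mu]] has negative real part (so the zero equilibrium of the single-population mosquito model is locally asymptotically stable). -/
open Polynomial Matrix

lemma quad_root_re_neg (b c : ℝ) (hb : 0 < b) (hc : 0 < c) (lam : ℂ)
    (h : lam ^ 2 + (b : ℂ) * lam + (c : ℂ) = 0) : lam.re < 0 := by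
  have h1 := congrArg Complex.re h
  have h2 := congrArg Complex.im h
  simp [pow_two, Complex.add_re, Complex.add_im, Complex.mul_re, Complex.mul_im] at h1 h2
  set x := lam.re with hx
  set y := lam.im with hy
  by_contra hx0
  push_neg at hx0
  have h2' : y * (x + x + b) = 0 := by ring_nf; ring_nf at h2; linarith
  rcases mul_eq_zero.mp h2' with hy0 | hs
  · nlinarith
  · nlinarith

/-- if `R₀ᵤ < 1` then every complex eigenvalue of the Jacobian
`J₀` of the single-population mosquito model at the zero equilibrium has
negative real part. -/
theorem mosquito_zero_equilibrium_eigenvalues_neg_re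
    (φ ψ μa μfu μmu Ka θ : ℝ)
    (hφ : 0 < φ) (hψ : 0 < ψ) (hμa : 0 < μa) (hμfu : 0 < μfu)
    (hμmu : 0 < μmu) (hKa : 0 < Ka) (hθ0 : 0 < θ) (hθ1 : θ < 1)
    (hR0u : φ * θ * ψ / (μfu * (μa + ψ)) < 1) :
    ∀ lam : ℂ,
      ((!![-(μa + ψ), φ, 0;
          θ * ψ, -μfu, 0;
          (1 - θ) * ψ, 0, -μmu] : Matrix (Fin 3) (Fin 3) ℝ).map
        Complex.ofReal).charpoly.IsRoot lam → lam.re < 0 := by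
  intro lam h
  have hfac : (lam + (μmu : ℂ)) *
      (lam ^ 2 + ((μa + ψ + μfu : ℝ) : ℂ) * lam + ((μfu * (μa + ψ) - φ * θ * ψ : ℝ) : ℂ)) = 0 := by
    rw [Polynomial.IsRoot, Matrix.charpoly, ← Polynomial.coe_evalRingHom,
      RingHom.map_det] at h
    rw [Matrix.det_fin_three] at h
    simp [charmatrix_apply, Matrix.diagonal, Fin.isValue, Matrix.map_apply] at h
    push_cast
    ring_nf
    ring_nf at h
    linear_combination h
  have hden : 0 < μfu * (μa + ψ) := by positivity
  have hc : 0 < μfu * (μa + ψ) - φ * θ * ψ := by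
    have := (div_lt_one hden).mp hR0u
    linarith
  rcases mul_eq_zero.mp hfac with h1 | h2
  · have : lam = -(μmu : ℂ) := by linear_combination h1
    rw [this]
    simpa using hμmu
  · exact quad_root_re_neg _ _ (by linarith) hc lam h2
end

section
/- If R_0u = φθψ/(μ_fu(μ_a+ψ)) > 1, then every eigenvalue (over ℂ) of the 3×3 real matrix J_ss = [[−(μ_a+ψ) − φF*/K_a, φ(1 − A*/K_a), 0], [θψ, −μ_fu, 0], [(1−θ)ψ, 0, −μ_mu]], where A* = K_a(1 − 1/R_0u) and F* = θψA*/μ_fu, has negative real part (so the positive steady state of the single-population mosquito model is locally asymptotically stable). -/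
/-- A monic complex quadratic with positive real coefficients has roots with
negative real part. -/
lemma quad_root_neg_re_s16 (b c : ℝ) (hb : 0 < b) (hc : 0 < c) (z : ℂ)
    (hz : z ^ 2 + (b : ℂ) * z + (c : ℂ) = 0) : z.re < 0 := by
  by_contra h
  push_neg at h
  have h1 : z.re ^ 2 - z.im ^ 2 + b * z.re + c = 0 := by
    have := congrArg Complex.re hz
    simpa [Complex.add_re, pow_two, Complex.mul_re, Complex.mul_im] using this
  have h2 : z.re * z.im + z.im * z.re + b * z.im = 0 := by
    have := congrArg Complex.im hz
    simpa [Complex.add_im, pow_two, Complex.mul_re, Complex.mul_im] using this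
  have him : z.im = 0 := by
    have hfac : z.im * (2 * z.re + b) = 0 := by linear_combination h2
    rcases mul_eq_zero.mp hfac with h' | h'
    · exact h'
    · nlinarith
  rw [him] at h1
  nlinarith

/-- if `R₀ᵤ > 1` then every complex eigenvalue of the Jacobian
`J_ss` of the single-population mosquito model at the positive steady state has
negative real part. -/
theorem mosquito_steady_state_eigenvalues_neg_re
    (φ ψ μa μfu μmu Ka θ : ℝ)
    (hφ : 0 < φ) (hψ : 0 < ψ) (hμa : 0 < μa) (hμfu : 0 < μfu)
    (hμmu : 0 < μmu) (hKa : 0 < Ka) (hθ0 : 0 < θ) (hθ1 : θ < 1)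
    (hR0u : 1 < φ * θ * ψ / (μfu * (μa + ψ)))
    (Ast Fst : ℝ)
    (hAst : Ast = Ka * (1 - 1 / (φ * θ * ψ / (μfu * (μa + ψ)))))
    (hFst : Fst = θ * ψ * Ast / μfu) :
    ∀ lam : ℂ,
      ((!![-(μa + ψ) - φ * Fst / Ka, φ * (1 - Ast / Ka), 0;
          θ * ψ, -μfu, 0;
          (1 - θ) * ψ, 0, -μmu] : Matrix (Fin 3) (Fin 3) ℝ).map
        Complex.ofReal).charpoly.IsRoot lam → lam.re < 0 := by
  intro lam hroot
  set R : ℝ := φ * θ * ψ / (μfu * (μa + ψ)) with hR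
  have haψ : 0 < μa + ψ := by linarith
  have hRpos : 0 < R := by linarith
  -- key real identities
  have hAstKa : 1 - Ast / Ka = 1 / R := by
    rw [hAst]; field_simp; ring
  have hkey : φ * (1 - Ast / Ka) * (θ * ψ) = μfu * (μa + ψ) := by
    rw [hAstKa, hR]
    field_simp
  have hAstpos : 0 < Ast := by
    rw [hAst]
    have : 1 / R < 1 := by
      rw [div_lt_one hRpos]; linarith
    nlinarith
  have hFstpos : 0 < Fst := by
    rw [hFst]; positivity
  set p : ℝ := φ * Fst / Ka with hp
  have hppos : 0 < p := by positivity
  -- extract the factored polynomial equation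
  rw [Matrix.charpoly, Matrix.det_fin_three] at hroot
  simp [Polynomial.IsRoot, Matrix.charmatrix_apply, Matrix.diagonal_apply] at hroot
  have hfac : (lam + (μmu : ℂ)) *
      (lam ^ 2 + ((μa + ψ + p + μfu : ℝ) : ℂ) * lam + ((p * μfu : ℝ) : ℂ)) = 0 := by
    have hkeyC : (φ : ℂ) * (1 - (Ast : ℂ) / (Ka : ℂ)) * ((θ : ℂ) * (ψ : ℂ))
        = (μfu : ℂ) * ((μa : ℂ) + (ψ : ℂ)) := by
      exact_mod_cast congrArg Complex.ofReal hkey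
    push_cast
    linear_combination (lam + (μmu : ℂ)) * hkeyC + hroot
  rcases mul_eq_zero.mp hfac with h | h
  · have : lam = -(μmu : ℂ) := by linear_combination h
    rw [this]
    simpa using hμmu
  · exact quad_root_neg_re_s16 _ _ (by positivity) (by positivity) lam h
end

section
/- The region D = {(A,F,M) ∈ ℝ³ : 0 ≤ A ≤ K_a, 0 ≤ F ≤ ψθK_a/μ_fu, 0 ≤ M ≤ ψ(1−θ)K_a/μ_mu} is positively invariant for the single-population mosquito model: if x : [0,∞) → ℝ³ is differentiable and satisfies x'(t) = f(x(t)) for all t ≥ 0, where f is the model's vector field, and x(0) ∈ D, then x(t) ∈ D for all t ≥ 0. -/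
/-!
Let `V t` be the sup-norm distance from `x t` to the box. At a coordinate face that `x t`
violates most, the field at `x t` differs by at most `K * V t` from the field at the projection
of `x t` onto the box, which points into the box; here `K` is a Lipschitz constant of the
(polynomial) field on a compact set containing the trajectory and its projection. Hence the
upper right Dini derivative of `V` is at most `K * V`, and `V 0 = 0` forces `V = 0` by Gronwall.
-/

/-- The single-population mosquito model vector field on `(A, F, M)`
(indices 0, 1, 2). -/
noncomputable def mosqField (φ ψ μa μfu μmu Ka θ : ℝ) (x : Fin 3 → ℝ) :
    Fin 3 → ℝ :=
  ![φ * x 1 * (1 - x 0 / Ka) - (μa + ψ) * x 0,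
    θ * ψ * x 0 - μfu * x 1,
    (1 - θ) * ψ * x 0 - μmu * x 2]

open Filter Set Topology Finset

theorem eventually_lt_add_mul_sub_of_hasDerivWithinAt {g : ℝ → ℝ} {d s c r : ℝ}
    (hg : HasDerivWithinAt g d (Ici s) s) (hgc : g s ≤ c) (hd : g s = c → d < r) :
    ∀ᶠ z in 𝓝[>] s, g z < c + r * (z - s) := by
  rcases hgc.eq_or_lt with hgc | hgc
  · have hslope : ∀ᶠ z in 𝓝[>] s, slope g s z < r :=
      ((hasDerivWithinAt_iff_tendsto_slope' (lt_irrefl s)).1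
        (hasDerivWithinAt_Ioi_iff_Ici.2 hg)).eventually_lt_const (hd hgc)
    filter_upwards [hslope, self_mem_nhdsWithin] with z hz hzs
    rw [slope_def_field, div_lt_iff₀ (sub_pos.2 hzs)] at hz
    linarith
  · have hcont : ContinuousWithinAt (fun z => g z - r * (z - s)) (Ici s) s :=
      hg.continuousWithinAt.sub (by fun_prop)
    have hev := hcont.eventually_lt continuousWithinAt_const (by simpa using hgc)
    filter_upwards [nhdsWithin_mono s Ioi_subset_Ici_self hev] with z hz
    linarith

theorem finset_sup'_le_gronwallBound {ι : Type*} [Fintype ι] [Nonempty ι] {g g' : ι → ℝ → ℝ}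
    {K a b : ℝ} (hg : ∀ i, ContinuousOn (g i) (Icc a b))
    (hg' : ∀ i, ∀ s ∈ Ico a b, HasDerivWithinAt (g i) (g' i s) (Ici s) s)
    (hactive : ∀ s ∈ Ico a b, ∀ i, g i s = univ.sup' univ_nonempty (g · s) →
      g' i s ≤ K * univ.sup' univ_nonempty (g · s)) :
    ∀ s ∈ Icc a b, univ.sup' univ_nonempty (g · s) ≤
      gronwallBound (univ.sup' univ_nonempty (g · a)) K 0 (s - a) := by
  set V := fun s => univ.sup' univ_nonempty (g · s)
  refine le_gronwallBound_of_liminf_deriv_right_le (f' := fun s => K * V s)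
    (ContinuousOn.finset_sup'_apply _ fun i _ => hg i) ?_ le_rfl fun _ _ => (add_zero _).ge
  intro s hs r hr
  have hlt : ∀ i, ∀ᶠ z in 𝓝[>] s, g i z < V s + r * (z - s) := fun i =>
    eventually_lt_add_mul_sub_of_hasDerivWithinAt (hg' i s hs) (le_sup' (g · s) (mem_univ i))
      fun h => (hactive s hs i h).trans_lt hr
  refine (((eventually_all.2 hlt).and self_mem_nhdsWithin).mono fun z ⟨hz, hzs⟩ => ?_).frequently
  have hVz : V z < V s + r * (z - s) := (sup'_lt_iff _).2 fun i _ => hz i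
  rw [inv_mul_lt_iff₀ (sub_pos.2 hzs)]
  linarith

section Box

variable {ι : Type*}

def boxViolation (lo hi y : ι → ℝ) : Option (ι ⊕ ι) → ℝ
  | none => 0
  | some (.inl i) => lo i - y i
  | some (.inr i) => y i - hi i

theorem continuous_boxViolation (lo hi : ι → ℝ) (o : Option (ι ⊕ ι)) :
    Continuous fun y => boxViolation lo hi y o := by
  rcases o with _ | i | i <;> simp only [boxViolation] <;> fun_prop

theorem HasDerivWithinAt.boxViolation {x : ℝ → ι → ℝ} {v : ι → ℝ} {s : Set ℝ} {t : ℝ}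
    (hx : HasDerivWithinAt x v s t) (lo hi : ι → ℝ) (o : Option (ι ⊕ ι)) :
    HasDerivWithinAt (fun t => boxViolation lo hi (x t) o) (boxViolation 0 0 v o) s t := by
  rcases o with _ | i | i
  · exact hasDerivWithinAt_const _ _ _
  · simpa only [_root_.boxViolation, Pi.zero_apply, zero_sub]
      using (hasDerivWithinAt_pi.1 hx i).const_sub (lo i)
  · simpa only [_root_.boxViolation, Pi.zero_apply, sub_zero]
      using (hasDerivWithinAt_pi.1 hx i).sub_const (hi i)

variable [Fintype ι] {lo hi y : ι → ℝ}

/-- For `lo ≤ hi`, the sup-norm distance from `y` to the box `Icc lo hi`. -/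
def boxExcess (lo hi y : ι → ℝ) : ℝ :=
  univ.sup' univ_nonempty (boxViolation lo hi y)

theorem boxViolation_le_boxExcess (o : Option (ι ⊕ ι)) :
    boxViolation lo hi y o ≤ boxExcess lo hi y :=
  le_sup' _ (mem_univ o)

theorem boxExcess_nonneg : 0 ≤ boxExcess lo hi y :=
  boxViolation_le_boxExcess none

theorem boxExcess_nonpos_iff : boxExcess lo hi y ≤ 0 ↔ y ∈ Icc lo hi := by
  simp only [boxExcess, sup'_le_iff, Finset.mem_univ, true_implies, Option.forall, Sum.forall,
    boxViolation, le_refl, sub_nonpos, Set.mem_Icc, Pi.le_def]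
  tauto

theorem norm_sub_sup_inf_le_boxExcess : ‖y - lo ⊔ (hi ⊓ y)‖ ≤ boxExcess lo hi y := by
  refine (pi_norm_le_iff_of_nonneg boxExcess_nonneg).2 fun i => ?_
  have h0 : 0 ≤ boxExcess lo hi y := boxExcess_nonneg
  have hlo : lo i - y i ≤ boxExcess lo hi y := boxViolation_le_boxExcess (some (.inl i))
  have hhi : y i - hi i ≤ boxExcess lo hi y := boxViolation_le_boxExcess (some (.inr i))
  rw [Pi.sub_apply, Pi.sup_apply, Pi.inf_apply, Real.norm_eq_abs]
  grind

theorem boxViolation_le_mul_boxExcess {f : (ι → ℝ) → ι → ℝ} {K : NNReal} {S : Set (ι → ℝ)}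
    (hf : LipschitzOnWith K f S) (hlohi : lo ≤ hi)
    (hlo : ∀ y ∈ Icc lo hi, ∀ i, y i = lo i → 0 ≤ f y i)
    (hhi : ∀ y ∈ Icc lo hi, ∀ i, y i = hi i → f y i ≤ 0)
    (hy : y ∈ S) (hp : lo ⊔ (hi ⊓ y) ∈ S) {o : Option (ι ⊕ ι)}
    (ho : boxViolation lo hi y o = boxExcess lo hi y) :
    boxViolation 0 0 (f y) o ≤ K * boxExcess lo hi y := by
  -- `p` is the projection of `y` onto the box; it lies on every face that `y` violates maximally.
  set p := lo ⊔ (hi ⊓ y)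
  have hpmem : p ∈ Icc lo hi := ⟨le_sup_left, sup_le hlohi inf_le_left⟩
  have hclose : ∀ i, |f y i - f p i| ≤ K * boxExcess lo hi y := fun i =>
    calc |f y i - f p i| ≤ ‖f y - f p‖ := norm_le_pi_norm (f y - f p) i
      _ ≤ K * ‖y - p‖ := by simpa only [dist_eq_norm] using hf.dist_le_mul y hy p hp
      _ ≤ K * boxExcess lo hi y := by gcongr; exact norm_sub_sup_inf_le_boxExcess
  have h0 : 0 ≤ boxExcess lo hi y := boxExcess_nonneg
  rcases o with _ | i | i
  · exact mul_nonneg K.2 h0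
  · have hpi : p i = lo i := by
      change lo i - y i = _ at ho
      simp only [p, Pi.sup_apply, Pi.inf_apply]
      grind
    have := hlo p hpmem i hpi
    change 0 - f y i ≤ _
    linarith [abs_le.1 (hclose i)]
  · have hpi : p i = hi i := by
      change y i - hi i = _ at ho
      have := hlohi i
      simp only [p, Pi.sup_apply, Pi.inf_apply]
      grind
    have := hhi p hpmem i hpi
    change f y i - 0 ≤ _
    linarith [abs_le.1 (hclose i)]

theorem mapsTo_Icc_of_inward_field {f : (ι → ℝ) → ι → ℝ} {x : ℝ → ι → ℝ}
    {a b : ℝ} (hf : LocallyLipschitz f)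
    (hlo : ∀ y ∈ Icc lo hi, ∀ i, y i = lo i → 0 ≤ f y i)
    (hhi : ∀ y ∈ Icc lo hi, ∀ i, y i = hi i → f y i ≤ 0)
    (hx : ContinuousOn x (Icc a b))
    (hx' : ∀ t ∈ Ico a b, HasDerivWithinAt x (f (x t)) (Ici t) t)
    (ha : x a ∈ Icc lo hi) : MapsTo x (Icc a b) (Icc lo hi) := by
  have hlohi : lo ≤ hi := ha.1.trans ha.2
  have hcompact : IsCompact (x '' Icc a b) := isCompact_Icc.image_of_continuousOn hx
  have hclamp : Continuous fun y : ι → ℝ => lo ⊔ (hi ⊓ y) :=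
    continuous_pi fun i => continuous_const.max (continuous_const.min (continuous_apply i))
  obtain ⟨K, hK⟩ :=
    (hf.locallyLipschitzOn (s := x '' Icc a b ∪ (fun y => lo ⊔ (hi ⊓ y)) '' (x '' Icc a b))
      ).exists_lipschitzOnWith_of_compact (hcompact.union (hcompact.image hclamp))
  have hexcess := finset_sup'_le_gronwallBound (K := K)
    (g := fun o t => boxViolation lo hi (x t) o) (g' := fun o t => boxViolation 0 0 (f (x t)) o)
    (fun o => (continuous_boxViolation lo hi o).comp_continuousOn hx)
    (fun o t ht => (hx' t ht).boxViolation lo hi o)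
    (fun t ht o ho => boxViolation_le_mul_boxExcess hK hlohi hlo hhi
      (Or.inl (mem_image_of_mem x (Ico_subset_Icc_self ht)))
      (Or.inr (mem_image_of_mem _ (mem_image_of_mem x (Ico_subset_Icc_self ht)))) ho)
  intro t ht
  have hxa : boxExcess lo hi (x a) = 0 :=
    le_antisymm (boxExcess_nonpos_iff.2 ha) boxExcess_nonneg
  have hxt : boxExcess lo hi (x t) ≤ gronwallBound (boxExcess lo hi (x a)) K 0 (t - a) :=
    hexcess t ht
  rwa [hxa, gronwallBound_ε0_δ0, boxExcess_nonpos_iff] at hxt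

end Box

section Mosquito

variable {φ ψ μa μfu μmu Ka θ : ℝ}

theorem contDiff_mosqField {n : WithTop ℕ∞} : ContDiff ℝ n (mosqField φ ψ μa μfu μmu Ka θ) :=
  contDiff_pi.2 fun i => by
    fin_cases i <;>
      dsimp only [mosqField, Fin.zero_eta, Fin.mk_one, Fin.reduceFinMk, Matrix.cons_val] <;> fun_prop

theorem mosqField_nonneg_of_eq_zero (hφ : 0 ≤ φ) (hψ : 0 ≤ ψ) (hθ0 : 0 ≤ θ) (hθ1 : θ ≤ 1)
    {y : Fin 3 → ℝ} (hy : 0 ≤ y) (i : Fin 3) (hi : y i = 0) :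
    0 ≤ mosqField φ ψ μa μfu μmu Ka θ y i := by
  have hA := hy 0
  have hF := hy 1
  fin_cases i <;> dsimp only [mosqField, Fin.zero_eta, Fin.mk_one, Fin.reduceFinMk,
    Matrix.cons_val] at hi ⊢
  · rw [hi, zero_div, sub_zero, mul_one, mul_zero, sub_zero]
    exact mul_nonneg hφ hF
  · rw [hi, mul_zero, sub_zero]
    exact mul_nonneg (mul_nonneg hθ0 hψ) hA
  · rw [hi, mul_zero, sub_zero]
    exact mul_nonneg (mul_nonneg (sub_nonneg.2 hθ1) hψ) hA

theorem mosqField_nonpos_of_eq_upper (hKa : 0 < Ka) (hμa : 0 ≤ μa) (hψ : 0 ≤ ψ) (hθ0 : 0 ≤ θ)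
    (hθ1 : θ ≤ 1) (hμfu : μfu ≠ 0) (hμmu : μmu ≠ 0) {y : Fin 3 → ℝ} (hy : y 0 ≤ Ka) (i : Fin 3)
    (hi : y i = ![Ka, ψ * θ * Ka / μfu, ψ * (1 - θ) * Ka / μmu] i) :
    mosqField φ ψ μa μfu μmu Ka θ y i ≤ 0 := by
  fin_cases i <;> dsimp only [mosqField, Fin.zero_eta, Fin.mk_one, Fin.reduceFinMk,
    Matrix.cons_val] at hi ⊢
  · rw [hi, div_self hKa.ne', sub_self, mul_zero, zero_sub, neg_nonpos]
    exact mul_nonneg (add_nonneg hμa hψ) hKa.le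
  · rw [hi, mul_div_cancel₀ _ hμfu, sub_nonpos, mul_comm θ ψ]
    exact mul_le_mul_of_nonneg_left hy (mul_nonneg hψ hθ0)
  · rw [hi, mul_div_cancel₀ _ hμmu, sub_nonpos, mul_comm (1 - θ) ψ]
    exact mul_le_mul_of_nonneg_left hy (mul_nonneg hψ (sub_nonneg.2 hθ1))

end Mosquito

/-- the box `D` is positively invariant for the single-population
mosquito model. -/
theorem mosquito_region_positively_invariant
    (φ ψ μa μfu μmu Ka θ : ℝ)
    (hφ : 0 < φ) (hψ : 0 < ψ) (hμa : 0 < μa) (hμfu : 0 < μfu)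
    (hμmu : 0 < μmu) (hKa : 0 < Ka) (hθ0 : 0 < θ) (hθ1 : θ < 1)
    (D : Set (Fin 3 → ℝ))
    (hD : D = {x | 0 ≤ x 0 ∧ x 0 ≤ Ka ∧ 0 ≤ x 1 ∧ x 1 ≤ ψ * θ * Ka / μfu ∧
      0 ≤ x 2 ∧ x 2 ≤ ψ * (1 - θ) * Ka / μmu})
    (x : ℝ → (Fin 3 → ℝ))
    (hx : ∀ t, 0 ≤ t → HasDerivAt x (mosqField φ ψ μa μfu μmu Ka θ (x t)) t)
    (hx0 : x 0 ∈ D) :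
    ∀ t, 0 ≤ t → x t ∈ D := by
  intro t ht
  have hbox : D = Icc 0 ![Ka, ψ * θ * Ka / μfu, ψ * (1 - θ) * Ka / μmu] := by
    ext y
    simp only [hD, Fin.isValue, mem_ofPred_eq, Nat.succ_eq_add_one, Nat.reduceAdd, Set.mem_Icc,
      Pi.le_def, Pi.zero_apply, Fin.forall_fin_succ, Fin.succ_zero_eq_one, Fin.succ_one_eq_two,
      IsEmpty.forall_iff, and_true, Matrix.cons_val_zero, Matrix.cons_val_succ,
      Matrix.cons_val_fin_one]
    tauto
  rw [hbox] at hx0 ⊢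
  exact mapsTo_Icc_of_inward_field (contDiff_mosqField (n := 1)).locallyLipschitz
    (fun y hy => mosqField_nonneg_of_eq_zero hφ.le hψ.le hθ0.le hθ1.le hy.1)
    (fun y hy => mosqField_nonpos_of_eq_upper hKa hμa.le hψ.le hθ0.le hθ1.le hμfu.ne' hμmu.ne'
      (hy.2 0))
    (fun s hs => (hx s hs.1).continuousAt.continuousWithinAt)
    (fun s hs => (hx s hs.1).hasDerivWithinAt) hx0 ⟨ht, le_rfl⟩
end

section
/- Assume R_0u = φθψ/(μ_fu(μ_a+ψ)) < 1. Then the zero equilibrium (0,0,0) of the single-population mosquito model is globally asymptotically stable on D: for every differentiable x : [0,∞) → ℝ³ with x'(t) = f(x(t)) for all t ≥ 0 and x(0) ∈ D, one has x(t) → (0,0,0) as t → ∞. -/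
section Aux

open Real Set Filter Topology

set_option maxHeartbeats 1000000

private lemma mosq_nonneg (φ ψ μa μfu Ka θ : ℝ)
    (hφ : 0 < φ) (hψ : 0 < ψ) (hμa : 0 < μa) (hμfu : 0 < μfu)
    (hKa : 0 < Ka) (hθ0 : 0 < θ)
    (A F : ℝ → ℝ)
    (hA : ∀ t, 0 ≤ t → HasDerivAt A (φ * F t * (1 - A t / Ka) - (μa + ψ) * A t) t)
    (hF : ∀ t, 0 ≤ t → HasDerivAt F (θ * ψ * A t - μfu * F t) t)
    (hA0 : 0 ≤ A 0) (hF0 : 0 ≤ F 0) :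
    ∀ t, 0 ≤ t → 0 ≤ A t ∧ 0 ≤ F t := by
  intro T hT
  have hL0 : (0:ℝ) < 2*φ + θ*ψ + 1 := by positivity
  set L : ℝ := 2*φ + θ*ψ + 1 with hL
  have hAc : ContinuousOn A (Icc 0 T) := fun s hs => ((hA s hs.1).continuousAt).continuousWithinAt
  have hFc : ContinuousOn F (Icc 0 T) := fun s hs => ((hF s hs.1).continuousAt).continuousWithinAt
  have main : ∀ ε : ℝ, 0 < ε → ε * Real.exp (L*T) ≤ Ka →
      ∀ s ∈ Icc (0:ℝ) T, 0 < A s + ε * Real.exp (L*s) ∧ 0 < F s + ε * Real.exp (L*s) := by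
    intro ε hε hεKa
    have hS : ∀ s ∈ Icc (0:ℝ) T,
        ¬ (A s + ε*Real.exp (L*s) ≤ 0 ∨ F s + ε*Real.exp (L*s) ≤ 0) := by
      by_contra hcon
      push_neg at hcon
      obtain ⟨s₀, hs₀, hbad⟩ := hcon
      set S := {s : ℝ | s ∈ Icc (0:ℝ) T ∧
        (A s + ε*Real.exp (L*s) ≤ 0 ∨ F s + ε*Real.exp (L*s) ≤ 0)} with hSdef
      have hgc : Continuous (fun s : ℝ => ε * Real.exp (L*s)) :=
        continuous_const.mul (Real.continuous_exp.comp (continuous_const.mul continuous_id))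
      have hg' : ∀ s : ℝ, HasDerivAt (fun u => ε * Real.exp (L*u)) (ε * (Real.exp (L*s) * L)) s := by
        intro s
        have h1 : HasDerivAt (fun u : ℝ => L*u) L s := by simpa using (hasDerivAt_id s).const_mul L
        exact h1.exp.const_mul ε
      have hgpos : ∀ s : ℝ, 0 < ε * Real.exp (L*s) := fun s => by positivity
      have hSsub : S ⊆ Icc 0 T := fun s hs => hs.1
      have hScl : IsClosed S := by
        have e1 : ContinuousOn (fun s => A s + ε*Real.exp (L*s)) (Icc 0 T) :=
          hAc.add (hgc.continuousOn)
        have e2 : ContinuousOn (fun s => F s + ε*Real.exp (L*s)) (Icc 0 T) :=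
          hFc.add (hgc.continuousOn)
        have hSeq : S = (Icc 0 T ∩ (fun s => A s + ε*Real.exp (L*s)) ⁻¹' Iic 0)
            ∪ (Icc 0 T ∩ (fun s => F s + ε*Real.exp (L*s)) ⁻¹' Iic 0) := by
          ext u
          simp only [hSdef, mem_setOf_eq, mem_union, mem_inter_iff, mem_preimage, mem_Iic]
          tauto
        rw [hSeq]
        exact (e1.preimage_isClosed_of_isClosed isClosed_Icc isClosed_Iic).union
          (e2.preimage_isClosed_of_isClosed isClosed_Icc isClosed_Iic)
      have hSne : S.Nonempty := ⟨s₀, hs₀, hbad⟩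
      have hSbdd : BddBelow S := BddBelow.mono hSsub bddBelow_Icc
      set τ := sInf S with hτdef
      have hτS : τ ∈ S := hScl.csInf_mem hSne hSbdd
      have hτIcc : τ ∈ Icc (0:ℝ) T := hτS.1
      have hτ0 : 0 < τ := by
        rcases lt_or_eq_of_le hτIcc.1 with h | h
        · exact h
        · exfalso
          have h2 := hτS.2
          rw [← h] at h2
          have he : (0:ℝ) < ε * Real.exp (L*0) := hgpos 0
          rcases h2 with h2 | h2 <;> linarith
      have hbef : ∀ s, 0 ≤ s → s < τ →
          0 < A s + ε*Real.exp (L*s) ∧ 0 < F s + ε*Real.exp (L*s) := by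
        intro s hs0 hsτ
        have hsT : s ≤ T := le_trans hsτ.le hτIcc.2
        have hns : s ∉ S := fun hmem => absurd (csInf_le hSbdd hmem) (not_le.2 hsτ)
        simp only [hSdef, mem_setOf_eq, not_and, not_or, not_le] at hns
        exact hns ⟨hs0, hsT⟩
      have hτlim : ∀ (G : ℝ → ℝ), ContinuousOn G (Icc 0 T) →
          (∀ s, 0 ≤ s → s < τ → 0 < G s) → 0 ≤ G τ := by
        intro G hGc hGpos
        have hcont : ContinuousWithinAt G (Icc 0 T) τ := hGc τ hτIcc
        have hle : (𝓝[Ico 0 τ] τ) ≤ 𝓝[Icc 0 T] τ :=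
          nhdsWithin_mono τ (fun u hu => ⟨hu.1, le_trans hu.2.le hτIcc.2⟩)
        have hnb : (𝓝[Ico 0 τ] τ).NeBot := by
          rw [← mem_closure_iff_nhdsWithin_neBot, closure_Ico (ne_of_lt hτ0)]
          exact ⟨hτ0.le, le_refl τ⟩
        exact ge_of_tendsto (hcont.tendsto.mono_left hle)
          (eventually_mem_nhdsWithin.mono (fun s hs => (hGpos s hs.1 hs.2).le))
      have hAτ : 0 ≤ A τ + ε*Real.exp (L*τ) :=
        hτlim _ (hAc.add (hgc.continuousOn))
          (fun s h1 h2 => (hbef s h1 h2).1)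
      have hFτ : 0 ≤ F τ + ε*Real.exp (L*τ) :=
        hτlim _ (hFc.add (hgc.continuousOn))
          (fun s h1 h2 => (hbef s h1 h2).2)
      have hslope : ∀ (G : ℝ → ℝ) (d : ℝ), HasDerivAt G d τ → G τ = 0 →
          (∀ s, 0 ≤ s → s < τ → 0 ≤ G s) → d ≤ 0 := by
        intro G d hd hGτ hGnn
        have hd' := hd.hasDerivWithinAt (s := Iio τ)
        rw [hasDerivWithinAt_iff_tendsto_slope] at hd'
        rw [Set.diff_singleton_eq_self (by simp)] at hd'
        haveI : (𝓝[Iio τ] τ).NeBot := nhdsLT_neBot τ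
        refine le_of_tendsto hd' ?_
        have h0 : ∀ᶠ s in 𝓝 τ, (0:ℝ) < s := eventually_gt_nhds hτ0
        filter_upwards [eventually_nhdsWithin_of_eventually_nhds h0,
          self_mem_nhdsWithin] with s hs0 hsτ
        have hGs : 0 ≤ G s := hGnn s hs0.le hsτ
        rw [slope_def_field]
        apply div_nonpos_of_nonneg_of_nonpos
        · linarith
        · have : s < τ := hsτ
          linarith
      have hEKa : ε * Real.exp (L*τ) ≤ Ka := by
        calc ε * Real.exp (L*τ) ≤ ε * Real.exp (L*T) := by
              have := Real.exp_le_exp.2 (mul_le_mul_of_nonneg_left hτIcc.2 hL0.le)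
              nlinarith
          _ ≤ Ka := hεKa
      have hE0 : 0 < ε * Real.exp (L*τ) := hgpos τ
      rcases hτS.2 with hcase | hcase
      · -- A-crossing
        have heq : A τ = -(ε*Real.exp (L*τ)) := by linarith
        have hd : HasDerivAt (fun s => A s + ε*Real.exp (L*s))
            ((φ * F τ * (1 - A τ / Ka) - (μa + ψ) * A τ) + ε * (Real.exp (L*τ) * L)) τ :=
          (hA τ hτIcc.1).add (hg' τ)
        have hle := hslope _ _ hd (by linarith) (fun s h1 h2 => (hbef s h1 h2).1.le)
        have hcoef2 : 1 - A τ / Ka ≤ 2 := by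
          rw [heq, neg_div]
          have : (ε*Real.exp (L*τ))/Ka ≤ 1 := (div_le_one hKa).2 hEKa
          linarith
        have hcoef0 : 0 ≤ 1 - A τ / Ka := by
          rw [heq, neg_div]
          have : 0 ≤ (ε*Real.exp (L*τ))/Ka := by positivity
          linarith
        have hFτ' : -(ε*Real.exp (L*τ)) ≤ F τ := by linarith
        have hs1 := mul_le_mul_of_nonneg_right hFτ' hcoef0
        have hmain : (0:ℝ) < (φ * F τ * (1 - A τ / Ka) - (μa + ψ) * A τ)
            + ε * (Real.exp (L*τ) * L) := by
          nlinarith [hs1, mul_nonneg hE0.le (sub_nonneg.2 hcoef2), hE0,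
            mul_pos hφ hE0, mul_pos (mul_pos hθ0 hψ) hE0,
            mul_pos (add_pos hμa hψ) hE0, mul_le_mul_of_nonneg_left hs1 hφ.le]
        linarith
      · -- F-crossing
        have heq : F τ = -(ε*Real.exp (L*τ)) := by linarith
        have hd : HasDerivAt (fun s => F s + ε*Real.exp (L*s))
            ((θ * ψ * A τ - μfu * F τ) + ε * (Real.exp (L*τ) * L)) τ :=
          (hF τ hτIcc.1).add (hg' τ)
        have hle := hslope _ _ hd (by linarith) (fun s h1 h2 => (hbef s h1 h2).2.le)
        have hAτ' : -(ε*Real.exp (L*τ)) ≤ A τ := by linarith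
        have hmain : (0:ℝ) < (θ * ψ * A τ - μfu * F τ) + ε * (Real.exp (L*τ) * L) := by
          nlinarith [mul_le_mul_of_nonneg_left hAτ' (mul_pos hθ0 hψ).le, hE0,
            mul_pos hμfu hE0, mul_pos hφ hE0]
        linarith
    intro s hs
    have := hS s hs
    push_neg at this
    constructor <;> linarith [this.1, this.2]
  constructor
  · by_contra hc
    push_neg at hc
    have hAT : A T < 0 := hc
    set ε := min (Ka * Real.exp (-(L*T))) ((-(A T)) * Real.exp (-(L*T))) with hε
    have hε0 : 0 < ε := lt_min (by positivity) (mul_pos (by linarith) (Real.exp_pos _))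
    have hcancel : Real.exp (-(L*T)) * Real.exp (L*T) = 1 := by
      rw [← Real.exp_add]; simp
    have h1 : ε * Real.exp (L*T) ≤ Ka := by
      have h := mul_le_mul_of_nonneg_right (min_le_left (Ka * Real.exp (-(L*T)))
        ((-(A T)) * Real.exp (-(L*T)))) (Real.exp_pos (L*T)).le
      calc ε * Real.exp (L*T) ≤ Ka * Real.exp (-(L*T)) * Real.exp (L*T) := h
        _ = Ka := by rw [mul_assoc, hcancel, mul_one]
    have h2 := (main ε hε0 h1 T ⟨hT, le_refl T⟩).1
    have h3 : ε * Real.exp (L*T) ≤ -(A T) := by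
      have h := mul_le_mul_of_nonneg_right (min_le_right (Ka * Real.exp (-(L*T)))
        ((-(A T)) * Real.exp (-(L*T)))) (Real.exp_pos (L*T)).le
      calc ε * Real.exp (L*T) ≤ (-(A T)) * Real.exp (-(L*T)) * Real.exp (L*T) := h
        _ = -(A T) := by rw [mul_assoc, hcancel, mul_one]
    linarith
  · by_contra hc
    push_neg at hc
    have hFT : F T < 0 := hc
    set ε := min (Ka * Real.exp (-(L*T))) ((-(F T)) * Real.exp (-(L*T))) with hε
    have hε0 : 0 < ε := lt_min (by positivity) (mul_pos (by linarith) (Real.exp_pos _))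
    have hcancel : Real.exp (-(L*T)) * Real.exp (L*T) = 1 := by
      rw [← Real.exp_add]; simp
    have h1 : ε * Real.exp (L*T) ≤ Ka := by
      have h := mul_le_mul_of_nonneg_right (min_le_left (Ka * Real.exp (-(L*T)))
        ((-(F T)) * Real.exp (-(L*T)))) (Real.exp_pos (L*T)).le
      calc ε * Real.exp (L*T) ≤ Ka * Real.exp (-(L*T)) * Real.exp (L*T) := h
        _ = Ka := by rw [mul_assoc, hcancel, mul_one]
    have h2 := (main ε hε0 h1 T ⟨hT, le_refl T⟩).2
    have h3 : ε * Real.exp (L*T) ≤ -(F T) := by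
      have h := mul_le_mul_of_nonneg_right (min_le_right (Ka * Real.exp (-(L*T)))
        ((-(F T)) * Real.exp (-(L*T)))) (Real.exp_pos (L*T)).le
      calc ε * Real.exp (L*T) ≤ (-(F T)) * Real.exp (-(L*T)) * Real.exp (L*T) := h
        _ = -(F T) := by rw [mul_assoc, hcancel, mul_one]
    linarith


private lemma mosq_GAS_aux
    (φ ψ μa μfu μmu Ka θ : ℝ)
    (hφ : 0 < φ) (hψ : 0 < ψ) (hμa : 0 < μa) (hμfu : 0 < μfu)
    (hμmu : 0 < μmu) (hKa : 0 < Ka) (hθ0 : 0 < θ) (hθ1 : θ < 1)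
    (hR0u : φ * θ * ψ / (μfu * (μa + ψ)) < 1)
    (A F M : ℝ → ℝ)
    (hA : ∀ t, 0 ≤ t → HasDerivAt A (φ * F t * (1 - A t / Ka) - (μa + ψ) * A t) t)
    (hF : ∀ t, 0 ≤ t → HasDerivAt F (θ * ψ * A t - μfu * F t) t)
    (hM : ∀ t, 0 ≤ t → HasDerivAt M ((1 - θ) * ψ * A t - μmu * M t) t)
    (hAF : ∀ t, 0 ≤ t → 0 ≤ A t ∧ 0 ≤ F t)
    (hM0 : 0 ≤ M 0) :
    Tendsto A atTop (𝓝 0) ∧ Tendsto F atTop (𝓝 0) ∧ Tendsto M atTop (𝓝 0) := by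
  -- choose Lyapunov coefficient b and rate ε
  have hμaψ : (0:ℝ) < μa + ψ := by linarith
  have hfm : φ * θ * ψ < μfu * (μa + ψ) := by
    have := (div_lt_one (by positivity)).1 hR0u
    linarith
  set b : ℝ := (φ/μfu + (μa+ψ)/(θ*ψ))/2 with hbdef
  have hb0 : 0 < b := by positivity
  have hbl : φ/μfu < (μa+ψ)/(θ*ψ) := by
    rw [div_lt_div_iff₀ hμfu (by positivity)]
    nlinarith
  have hb1 : φ < b*μfu := by
    have : φ/μfu < b := by rw [hbdef]; linarith
    calc φ = φ/μfu * μfu := by field_simp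
      _ < b * μfu := by nlinarith [Real.exp_pos 0]
  have hb2 : b*(θ*ψ) < μa+ψ := by
    have hblt : b < (μa+ψ)/(θ*ψ) := by rw [hbdef]; linarith
    calc b*(θ*ψ) < (μa+ψ)/(θ*ψ) * (θ*ψ) := by nlinarith [mul_pos hθ0 hψ]
      _ = μa+ψ := by field_simp
  set ε : ℝ := min (min ((μa+ψ) - b*(θ*ψ)) ((b*μfu - φ)/b)) (μmu/2) with hεdef
  have hε0 : 0 < ε := by
    have a1 : 0 < (μa+ψ) - b*(θ*ψ) := by linarith
    have a2 : 0 < (b*μfu - φ)/b := div_pos (by linarith) hb0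
    have a3 : 0 < μmu/2 := by linarith
    rw [hεdef]
    exact lt_min (lt_min a1 a2) a3
  have he1 : ε ≤ (μa+ψ) - b*(θ*ψ) := le_trans (min_le_left _ _) (min_le_left _ _)
  have he2 : ε*b ≤ b*μfu - φ := by
    have h : ε ≤ (b*μfu - φ)/b := le_trans (min_le_left _ _) (min_le_right _ _)
    have := (le_div_iff₀ hb0).1 h
    linarith
  have he3 : ε ≤ μmu/2 := min_le_right _ _
  have hεμ : ε < μmu := by linarith
  -- Lyapunov function V
  set V : ℝ → ℝ := fun t => A t + b * F t with hVdef
  have hV : ∀ t, 0 ≤ t → HasDerivAt V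
      ((φ * F t * (1 - A t / Ka) - (μa + ψ) * A t) + b * (θ * ψ * A t - μfu * F t)) t :=
    fun t ht => ((hA t ht).add ((hF t ht).const_mul b))
  have hkey : ∀ t, 0 ≤ t →
      (φ * F t * (1 - A t / Ka) - (μa + ψ) * A t) + b * (θ * ψ * A t - μfu * F t)
        ≤ -(ε * V t) := by
    intro t ht
    obtain ⟨hAt, hFt⟩ := hAF t ht
    have t1 : 0 ≤ ((μa+ψ) - b*(θ*ψ) - ε) * A t := mul_nonneg (by linarith) hAt
    have t2 : 0 ≤ (b*μfu - φ - ε*b) * F t := mul_nonneg (by linarith) hFt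
    have t3 : 0 ≤ φ * F t * (A t / Ka) := by positivity
    rw [hVdef]
    nlinarith [t1, t2, t3]
  -- V t ≤ V 0 * exp (-(ε t))
  have hVcont : ContinuousOn V (Ici 0) :=
    fun t ht => ((hV t ht).continuousAt).continuousWithinAt
  have hexp : ∀ (c : ℝ) (t : ℝ), HasDerivAt (fun u : ℝ => Real.exp (c*u)) (Real.exp (c*t) * c) t := by
    intro c t
    have h1 : HasDerivAt (fun u : ℝ => c*u) c t := by simpa using (hasDerivAt_id t).const_mul c
    exact h1.exp
  have hg : ∀ t, 0 ≤ t → HasDerivAt (fun u => V u * Real.exp (ε*u))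
      (((φ * F t * (1 - A t / Ka) - (μa + ψ) * A t) + b * (θ * ψ * A t - μfu * F t))
        * Real.exp (ε*t) + V t * (Real.exp (ε*t) * ε)) t :=
    fun t ht => (hV t ht).mul (hexp ε t)
  have hanti : AntitoneOn (fun u => V u * Real.exp (ε*u)) (Ici 0) := by
    apply antitoneOn_of_deriv_nonpos (convex_Ici 0)
    · exact hVcont.mul (Real.continuous_exp.comp (continuous_const.mul continuous_id)).continuousOn
    · intro t ht
      rw [interior_Ici] at ht
      exact ((hg t (le_of_lt ht)).differentiableAt).differentiableWithinAt
    · intro t ht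
      rw [interior_Ici] at ht
      rw [(hg t (le_of_lt ht)).deriv]
      have hk := hkey t ht.le
      have hE := Real.exp_pos (ε*t)
      have h1 := mul_le_mul_of_nonneg_right hk hE.le
      nlinarith
  have hVb : ∀ t, 0 ≤ t → V t ≤ V 0 * Real.exp (-(ε*t)) := by
    intro t ht
    have h := hanti (self_mem_Ici) ht ht
    simp only [mul_zero, Real.exp_zero, mul_one] at h
    have hE := Real.exp_pos (ε*t)
    rw [Real.exp_neg, ← div_eq_mul_inv, le_div_iff₀ hE]
    exact h
  have hV0 : ∀ t, 0 ≤ t → 0 ≤ V t := by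
    intro t ht
    obtain ⟨hAt, hFt⟩ := hAF t ht
    rw [hVdef]; positivity
  have hAb : ∀ t, 0 ≤ t → A t ≤ V 0 * Real.exp (-(ε*t)) := by
    intro t ht
    obtain ⟨hAt, hFt⟩ := hAF t ht
    have h := hVb t ht
    have e : V t = A t + b * F t := rfl
    linarith [mul_nonneg hb0.le hFt]
  have hFb : ∀ t, 0 ≤ t → F t ≤ (V 0 / b) * Real.exp (-(ε*t)) := by
    intro t ht
    obtain ⟨hAt, hFt⟩ := hAF t ht
    have h := hVb t ht
    have e : V t = A t + b * F t := rfl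
    rw [div_mul_eq_mul_div, le_div_iff₀ hb0]
    linarith [hAt]
  -- limits for A and F
  have hexplim : Tendsto (fun t => Real.exp (-(ε*t))) atTop (𝓝 0) := by
    have h1 : Tendsto (fun t : ℝ => ε*t) atTop atTop :=
      Tendsto.const_mul_atTop hε0 tendsto_id
    exact Real.tendsto_exp_neg_atTop_nhds_zero.comp h1
  have hlim : ∀ c : ℝ, Tendsto (fun t => c * Real.exp (-(ε*t))) atTop (𝓝 0) := by
    intro c
    simpa using hexplim.const_mul c
  have hAtend : Tendsto A atTop (𝓝 0) := by
    apply squeeze_zero' (g := fun t => V 0 * Real.exp (-(ε*t)))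
    · filter_upwards [eventually_ge_atTop (0:ℝ)] with t ht; exact (hAF t ht).1
    · filter_upwards [eventually_ge_atTop (0:ℝ)] with t ht; exact hAb t ht
    · exact hlim _
  have hFtend : Tendsto F atTop (𝓝 0) := by
    apply squeeze_zero' (g := fun t => (V 0 / b) * Real.exp (-(ε*t)))
    · filter_upwards [eventually_ge_atTop (0:ℝ)] with t ht; exact (hAF t ht).2
    · filter_upwards [eventually_ge_atTop (0:ℝ)] with t ht; exact hFb t ht
    · exact hlim _
  refine ⟨hAtend, hFtend, ?_⟩
  -- M part
  set K : ℝ := (1-θ)*ψ*(V 0) with hKdef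
  have hK0 : 0 ≤ K := by
    have := hV0 0 le_rfl
    rw [hKdef]
    have h1θ : (0:ℝ) < 1 - θ := by linarith
    positivity
  set W : ℝ → ℝ := fun t => M t * Real.exp (μmu*t) with hWdef
  have hW : ∀ t, 0 ≤ t → HasDerivAt W
      (((1 - θ) * ψ * A t - μmu * M t) * Real.exp (μmu*t) + M t * (Real.exp (μmu*t) * μmu)) t :=
    fun t ht => (hM t ht).mul (hexp μmu t)
  have hWcont : ContinuousOn W (Ici 0) :=
    fun t ht => ((hW t ht).continuousAt).continuousWithinAt
  have hWderiv : ∀ t, 0 ≤ t →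
      ((1 - θ) * ψ * A t - μmu * M t) * Real.exp (μmu*t) + M t * (Real.exp (μmu*t) * μmu)
      = (1 - θ) * ψ * A t * Real.exp (μmu*t) := by intro t ht; ring
  -- W monotone
  have hWmono : MonotoneOn W (Ici 0) := by
    apply monotoneOn_of_deriv_nonneg (convex_Ici 0) hWcont
    · intro t ht
      rw [interior_Ici] at ht
      exact ((hW t ht.le).differentiableAt).differentiableWithinAt
    · intro t ht
      rw [interior_Ici] at ht
      rw [(hW t ht.le).deriv, hWderiv t ht.le]
      have := (hAF t ht.le).1
      have h1θ : (0:ℝ) < 1 - θ := by linarith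
      positivity
  have hMnn : ∀ t, 0 ≤ t → 0 ≤ M t := by
    intro t ht
    have h := hWmono self_mem_Ici ht ht
    simp only [hWdef, mul_zero, Real.exp_zero, mul_one] at h
    have hE := Real.exp_pos (μmu*t)
    by_contra hcon
    push_neg at hcon
    have := mul_neg_of_neg_of_pos hcon hE
    linarith
  -- upper comparison: Z t = K/(μmu-ε) * exp((μmu-ε) t) - W t is monotone
  have hμε : (0:ℝ) < μmu - ε := by linarith
  set C : ℝ := K/(μmu-ε) with hCdef
  have hC0 : 0 ≤ C := div_nonneg hK0 hμε.le
  have hZ : ∀ t, 0 ≤ t → HasDerivAt (fun u => C * Real.exp ((μmu-ε)*u) - W u)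
      (C * (Real.exp ((μmu-ε)*t) * (μmu-ε)) -
        (((1 - θ) * ψ * A t - μmu * M t) * Real.exp (μmu*t) + M t * (Real.exp (μmu*t) * μmu))) t :=
    fun t ht => (((hexp (μmu-ε) t).const_mul C).sub (hW t ht))
  have hZmono : MonotoneOn (fun u => C * Real.exp ((μmu-ε)*u) - W u) (Ici 0) := by
    apply monotoneOn_of_deriv_nonneg (convex_Ici 0)
    · exact (continuous_const.mul (Real.continuous_exp.comp (continuous_const.mul continuous_id))).continuousOn.sub hWcont
    · intro t ht
      rw [interior_Ici] at ht
      exact ((hZ t ht.le).differentiableAt).differentiableWithinAt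
    · intro t ht
      rw [interior_Ici] at ht
      rw [(hZ t ht.le).deriv, hWderiv t ht.le]
      have hC : C * (μmu - ε) = K := by rw [hCdef]; field_simp
      have hAt := (hAF t ht.le).1
      have hab := hAb t ht.le
      have h1θ : (0:ℝ) < 1 - θ := by linarith
      -- need : (1-θ)ψ A t * exp(μmu t) ≤ C(μmu-ε) exp((μmu-ε)t) = K exp((μmu-ε)t)
      have hsplit : Real.exp ((μmu-ε)*t) = Real.exp (μmu*t) * Real.exp (-(ε*t)) := by
        rw [← Real.exp_add]; ring_nf
      have hEμ := Real.exp_pos (μmu*t)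
      have h2 : (1 - θ) * ψ * A t ≤ K * Real.exp (-(ε*t)) := by
        have hmul := mul_le_mul_of_nonneg_left hab (mul_nonneg h1θ.le hψ.le)
        rw [hKdef]
        linarith [hmul]
      have h3 := mul_le_mul_of_nonneg_right h2 hEμ.le
      rw [sub_nonneg]
      calc (1 - θ) * ψ * A t * Real.exp (μmu*t)
          ≤ K * Real.exp (-(ε*t)) * Real.exp (μmu*t) := h3
        _ = C * (Real.exp ((μmu-ε)*t) * (μmu-ε)) := by
            rw [hsplit]; rw [hCdef]; field_simp
  have hMb : ∀ t, 0 ≤ t → M t ≤ M 0 * Real.exp (-(μmu*t)) + C * Real.exp (-(ε*t)) := by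
    intro t ht
    have h := hZmono self_mem_Ici ht ht
    simp only [hWdef, mul_zero, Real.exp_zero, mul_one] at h
    -- h : C * 1 - M 0 ≤ C * exp((μmu-ε)t) - M t * exp(μmu t)
    have hEμ := Real.exp_pos (μmu*t)
    have hsplit : Real.exp ((μmu-ε)*t) = Real.exp (μmu*t) * Real.exp (-(ε*t)) := by
      rw [← Real.exp_add]; ring_nf
    have h2 : M t * Real.exp (μmu*t) ≤ M 0 + C * Real.exp ((μmu-ε)*t) := by nlinarith [hC0]
    have hinv : Real.exp (-(μmu*t)) = (Real.exp (μmu*t))⁻¹ := Real.exp_neg _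
    rw [← le_div_iff₀ hEμ] at h2
    calc M t ≤ (M 0 + C * Real.exp ((μmu-ε)*t)) / Real.exp (μmu*t) := h2
      _ = M 0 * Real.exp (-(μmu*t)) + C * Real.exp (-(ε*t)) := by
          rw [hsplit, hinv]
          field_simp
  have hexplimμ : Tendsto (fun t => Real.exp (-(μmu*t))) atTop (𝓝 0) := by
    have h1 : Tendsto (fun t : ℝ => μmu*t) atTop atTop :=
      Tendsto.const_mul_atTop hμmu tendsto_id
    exact Real.tendsto_exp_neg_atTop_nhds_zero.comp h1
  apply squeeze_zero' (g := fun t => M 0 * Real.exp (-(μmu*t)) + C * Real.exp (-(ε*t)))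
  · filter_upwards [eventually_ge_atTop (0:ℝ)] with t ht; exact hMnn t ht
  · filter_upwards [eventually_ge_atTop (0:ℝ)] with t ht; exact hMb t ht
  · have := (hexplimμ.const_mul (M 0)).add (hexplim.const_mul C)
    simpa using this

end Aux

open Real Set Filter Topology in
set_option maxHeartbeats 1000000 in
/-- if `R₀ᵤ < 1` then the zero equilibrium of the
single-population mosquito model is globally asymptotically stable on `D`. -/
theorem mosquito_zero_equilibrium_GAS
    (φ ψ μa μfu μmu Ka θ : ℝ)
    (hφ : 0 < φ) (hψ : 0 < ψ) (hμa : 0 < μa) (hμfu : 0 < μfu)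
    (hμmu : 0 < μmu) (hKa : 0 < Ka) (hθ0 : 0 < θ) (hθ1 : θ < 1)
    (hR0u : φ * θ * ψ / (μfu * (μa + ψ)) < 1)
    (D : Set (Fin 3 → ℝ))
    (hD : D = {x | 0 ≤ x 0 ∧ x 0 ≤ Ka ∧ 0 ≤ x 1 ∧ x 1 ≤ ψ * θ * Ka / μfu ∧
      0 ≤ x 2 ∧ x 2 ≤ ψ * (1 - θ) * Ka / μmu})
    (x : ℝ → (Fin 3 → ℝ))
    (hx : ∀ t, 0 ≤ t → HasDerivAt x (mosqField φ ψ μa μfu μmu Ka θ (x t)) t)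
    (hx0 : x 0 ∈ D) :
    Filter.Tendsto x Filter.atTop (nhds 0) := by
  rw [hD] at hx0
  obtain ⟨h00, h01, h10, h11, h20, h21⟩ := hx0
  have hA : ∀ t, 0 ≤ t → HasDerivAt (fun u => x u 0)
      (φ * (x t 1) * (1 - x t 0 / Ka) - (μa + ψ) * (x t 0)) t := by
    intro t ht
    have h := hasDerivAt_pi.1 (hx t ht) 0
    simpa [mosqField] using h
  have hF : ∀ t, 0 ≤ t → HasDerivAt (fun u => x u 1)
      (θ * ψ * (x t 0) - μfu * (x t 1)) t := by
    intro t ht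
    have h := hasDerivAt_pi.1 (hx t ht) 1
    simpa [mosqField] using h
  have hM : ∀ t, 0 ≤ t → HasDerivAt (fun u => x u 2)
      ((1 - θ) * ψ * (x t 0) - μmu * (x t 2)) t := by
    intro t ht
    have h := hasDerivAt_pi.1 (hx t ht) 2
    simpa [mosqField] using h
  have hAF : ∀ t, 0 ≤ t → 0 ≤ x t 0 ∧ 0 ≤ x t 1 :=
    mosq_nonneg φ ψ μa μfu Ka θ hφ hψ hμa hμfu hKa hθ0 _ _ hA hF h00 h10
  have key := mosq_GAS_aux φ ψ μa μfu μmu Ka θ hφ hψ hμa hμfu hμmu hKa hθ0 hθ1 hR0u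
    (fun t => x t 0) (fun t => x t 1) (fun t => x t 2) hA hF hM hAF h20
  rw [tendsto_pi_nhds]
  intro i
  fin_cases i
  · simpa using key.1
  · simpa using key.2.1
  · simpa using key.2.2
end
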